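/- arXiv:2505.11657 — 9 statements merged into one kernel-verified Lean document; each statement's English description precedes it below -/
import Mathlib

section
/- Suppose (H1) and (H2) hold. Then for any φ in the profile set Γ, one has H(φ)(t) ≥ 0 for all t ∈ ℝ. -/
/-!
Applying (H2) to the segments `φ_t ≥ φ_{t-s}` shows that `t ↦ H(φ)(t)` is non-decreasing. As
`t → -∞` the segments `φ_t` converge uniformly to the constant `0`, so by continuity of `f`,
`H(φ)(t) → f(ĉ₀) = 0`; a non-decreasing function with limit `0` at `-∞` is non-negative.
-/

open Real Filter

/-- The segment `u_t ∈ C([−τ,0],ℝ)` of a function `u : ℝ → ℝ`, `u_t(s) = u(t+s)`. -/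
def seg (τ : ℝ) (u : ℝ → ℝ) (t : ℝ) : Set.Icc (-τ) (0 : ℝ) → ℝ :=
  fun s => u (t + s.1)

open Topology

def H (τ : ℝ) (f : (Set.Icc (-τ) (0 : ℝ) → ℝ) → ℝ) (β : ℝ) (u : ℝ → ℝ) (t : ℝ) : ℝ :=
  f (seg τ u t) + β * u t

theorem continuous_seg {τ : ℝ} {u : ℝ → ℝ} (hu : Continuous u) (t : ℝ) :
    Continuous (seg τ u t) :=
  hu.comp (continuous_const.add continuous_subtype_val)

theorem tendsto_seg_atBot {τ a : ℝ} {u : ℝ → ℝ} (hu : Continuous u)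
    (h : Tendsto u atBot (𝓝 a)) :
    Tendsto (fun t => (⟨seg τ u t, continuous_seg hu t⟩ : C(Set.Icc (-τ) (0 : ℝ), ℝ)))
      atBot (𝓝 (ContinuousMap.const _ a)) := by
  rw [ContinuousMap.tendsto_iff_tendstoUniformly, Metric.tendstoUniformly_iff]
  intro ε hε
  obtain ⟨T, hT⟩ := eventually_atBot.mp (Metric.tendsto_nhds.mp h ε hε)
  filter_upwards [eventually_le_atBot T] with t ht s
  rw [dist_comm]
  exact hT _ (by linarith [s.2.2])

theorem monotone_exp_mul_sub_shift {β s : ℝ} {u : ℝ → ℝ}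
    (h : Monotone fun x => exp (β * x) * (u (x + s) - u x)) (c : ℝ) :
    Monotone fun x => exp (β * x) * (u (c + x) - u (c - s + x)) := by
  have hfun : (fun x => exp (β * x) * (u (c + x) - u (c - s + x))) =
      fun x => exp (β * (s - c)) *
        (exp (β * (c - s + x)) * (u (c - s + x + s) - u (c - s + x))) := by
    funext x
    rw [← mul_assoc, ← exp_add]
    ring_nf
  rw [hfun]
  exact (h.comp (monotone_id.const_add _)).const_mul (exp_pos _).le

theorem monotone_H {τ : ℝ} (hτ : 0 ≤ τ) {f : (Set.Icc (-τ) (0 : ℝ) → ℝ) → ℝ} {K β : ℝ}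
    (hH2 : ∀ φ ψ : Set.Icc (-τ) (0 : ℝ) → ℝ, Continuous φ → Continuous ψ →
      (∀ s, 0 ≤ ψ s ∧ ψ s ≤ φ s ∧ φ s ≤ K) →
      Monotone (fun s : Set.Icc (-τ) (0 : ℝ) => exp (β * s.1) * (φ s - ψ s)) →
      0 ≤ f φ - f ψ +
        β * (φ ⟨0, Set.right_mem_Icc.mpr (neg_nonpos.mpr hτ)⟩ -
             ψ ⟨0, Set.right_mem_Icc.mpr (neg_nonpos.mpr hτ)⟩))
    {φ : ℝ → ℝ} (hφc : Continuous φ) (hφm : Monotone φ)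
    (hφ₀ : ∀ x, 0 ≤ φ x) (hφK : ∀ x, φ x ≤ K)
    (hφΓ : ∀ s : ℝ, 0 < s → Monotone fun t : ℝ => exp (β * t) * (φ (t + s) - φ t)) :
    Monotone (H τ f β φ) := by
  intro a b hab
  rcases hab.eq_or_lt with rfl | hlt
  · rfl
  have hshift : b - (b - a) = a := by ring
  have hbounds : ∀ s : Set.Icc (-τ) (0 : ℝ),
      0 ≤ seg τ φ a s ∧ seg τ φ a s ≤ seg τ φ b s ∧ seg τ φ b s ≤ K :=
    fun s => ⟨hφ₀ _, hφm (by linarith), hφK _⟩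
  have hmono : Monotone fun s : Set.Icc (-τ) (0 : ℝ) =>
      exp (β * s.1) * (seg τ φ b s - seg τ φ a s) := by
    have hΓ := monotone_exp_mul_sub_shift (hφΓ (b - a) (sub_pos.mpr hlt)) b
    rw [hshift] at hΓ
    exact hΓ.comp (Subtype.mono_coe _)
  have hH2ba := hH2 _ _ (continuous_seg hφc b) (continuous_seg hφc a) hbounds hmono
  simp only [seg, add_zero] at hH2ba
  simp only [H]
  linarith

theorem tendsto_H_atBot {τ : ℝ} {f : (Set.Icc (-τ) (0 : ℝ) → ℝ) → ℝ}
    (hf : Continuous fun φ : C(Set.Icc (-τ) (0 : ℝ), ℝ) => f ⇑φ)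
    (hf₀ : f (fun _ => (0 : ℝ)) = 0) (β : ℝ) {φ : ℝ → ℝ} (hφc : Continuous φ)
    (hφ₀ : Tendsto φ atBot (𝓝 0)) :
    Tendsto (H τ f β φ) atBot (𝓝 0) := by
  have hseg := (hf.tendsto _).comp (tendsto_seg_atBot (τ := τ) hφc hφ₀)
  have hlim : f ⇑(ContinuousMap.const (Set.Icc (-τ) (0 : ℝ)) (0 : ℝ)) + β * 0 = 0 := by
    rw [mul_zero, add_zero]
    exact hf₀
  exact hlim ▸ hseg.add (hφ₀.const_mul β)

theorem H_nonneg_on_profile_general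
    (τ : ℝ) (hτ : 0 < τ)
    (f : (Set.Icc (-τ) (0 : ℝ) → ℝ) → ℝ)
    (hf : Continuous fun φ : C(Set.Icc (-τ) (0 : ℝ), ℝ) => f ⇑φ)
    (K : ℝ)
    -- (H1)
    (hH1₀ : f (fun _ => (0 : ℝ)) = 0)
    (β : ℝ)
    -- (H2)
    (hH2 : ∀ φ ψ : Set.Icc (-τ) (0 : ℝ) → ℝ, Continuous φ → Continuous ψ →
      (∀ s, 0 ≤ ψ s ∧ ψ s ≤ φ s ∧ φ s ≤ K) →
      Monotone (fun s : Set.Icc (-τ) (0 : ℝ) => Real.exp (β * s.1) * (φ s - ψ s)) →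
      0 ≤ f φ - f ψ +
        β * (φ ⟨0, Set.right_mem_Icc.mpr (neg_nonpos.mpr hτ.le)⟩ -
             ψ ⟨0, Set.right_mem_Icc.mpr (neg_nonpos.mpr hτ.le)⟩))
    -- φ ∈ Γ
    (φ : ℝ → ℝ) (hφc : Continuous φ) (hφm : Monotone φ)
    (hφ₀ : Tendsto φ atBot (nhds 0)) (hφK : Tendsto φ atTop (nhds K))
    (hφΓ : ∀ s : ℝ, 0 < s →
      Monotone fun t : ℝ => Real.exp (β * t) * (φ (t + s) - φ t)) :
    ∀ t : ℝ, 0 ≤ f (seg τ φ t) + β * φ t := by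
  have hH_mono :=
    monotone_H hτ.le hH2 hφc hφm (hφm.le_of_tendsto hφ₀) (hφm.ge_of_tendsto hφK) hφΓ
  exact hH_mono.le_of_tendsto (tendsto_H_atBot hf hH1₀ β hφc hφ₀)

/-- Under (H1) and (H2), for any `φ` in the profile set `Γ`,
`H(φ)(t) = f(φ_t) + β φ(t) ≥ 0` for all `t`. -/
theorem H_nonneg_on_profile
    (τ : ℝ) (hτ : 0 < τ)
    (f : (Set.Icc (-τ) (0 : ℝ) → ℝ) → ℝ)
    (hf : Continuous fun φ : C(Set.Icc (-τ) (0 : ℝ), ℝ) => f ⇑φ)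
    (K : ℝ) (hK : 0 < K)
    -- (H1)
    (hH1₀ : f (fun _ => (0 : ℝ)) = 0) (hH1K : f (fun _ => K) = 0)
    (hH1ne : ∀ u : ℝ, 0 < u → u < K → f (fun _ => u) ≠ 0)
    (β : ℝ) (hβ : 0 ≤ β)
    -- (H2)
    (hH2 : ∀ φ ψ : Set.Icc (-τ) (0 : ℝ) → ℝ, Continuous φ → Continuous ψ →
      (∀ s, 0 ≤ ψ s ∧ ψ s ≤ φ s ∧ φ s ≤ K) →
      Monotone (fun s : Set.Icc (-τ) (0 : ℝ) => Real.exp (β * s.1) * (φ s - ψ s)) →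
      0 ≤ f φ - f ψ +
        β * (φ ⟨0, Set.right_mem_Icc.mpr (neg_nonpos.mpr hτ.le)⟩ -
             ψ ⟨0, Set.right_mem_Icc.mpr (neg_nonpos.mpr hτ.le)⟩))
    -- φ ∈ Γ
    (φ : ℝ → ℝ) (hφc : Continuous φ) (hφm : Monotone φ)
    (hφ₀ : Tendsto φ atBot (nhds 0)) (hφK : Tendsto φ atTop (nhds K))
    (hφΓ : ∀ s : ℝ, 0 < s →
      Monotone fun t : ℝ => Real.exp (β * t) * (φ (t + s) - φ t)) :
    ∀ t : ℝ, 0 ≤ f (seg τ φ t) + β * φ t :=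
  H_nonneg_on_profile_general τ hτ f hf K hH1₀ β hH2 φ hφc hφm hφ₀ hφK hφΓ
end

section
/- Suppose (H1) and (H2) hold. Then for any φ in the profile set Γ, the function t ↦ H(φ)(t) is non-decreasing on ℝ. -/
open Real Filter

/-- Under (H1) and (H2), for any `φ` in the profile set `Γ`, the function
`t ↦ H(φ)(t) = f(φ_t) + β φ(t)` is non-decreasing on `ℝ`. -/
theorem H_monotone_on_profile
    (τ : ℝ) (hτ : 0 < τ)
    (f : (Set.Icc (-τ) (0 : ℝ) → ℝ) → ℝ)
    (hf : Continuous fun φ : C(Set.Icc (-τ) (0 : ℝ), ℝ) => f ⇑φ)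
    (K : ℝ) (hK : 0 < K)
    -- (H1)
    (hH1₀ : f (fun _ => (0 : ℝ)) = 0) (hH1K : f (fun _ => K) = 0)
    (hH1ne : ∀ u : ℝ, 0 < u → u < K → f (fun _ => u) ≠ 0)
    (β : ℝ) (hβ : 0 ≤ β)
    -- (H2)
    (hH2 : ∀ φ ψ : Set.Icc (-τ) (0 : ℝ) → ℝ, Continuous φ → Continuous ψ →
      (∀ s, 0 ≤ ψ s ∧ ψ s ≤ φ s ∧ φ s ≤ K) →
      Monotone (fun s : Set.Icc (-τ) (0 : ℝ) => Real.exp (β * s.1) * (φ s - ψ s)) →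
      0 ≤ f φ - f ψ +
        β * (φ ⟨0, Set.right_mem_Icc.mpr (neg_nonpos.mpr hτ.le)⟩ -
             ψ ⟨0, Set.right_mem_Icc.mpr (neg_nonpos.mpr hτ.le)⟩))
    -- φ ∈ Γ
    (φ : ℝ → ℝ) (hφc : Continuous φ) (hφm : Monotone φ)
    (hφ₀ : Tendsto φ atBot (nhds 0)) (hφK : Tendsto φ atTop (nhds K))
    (hφΓ : ∀ s : ℝ, 0 < s →
      Monotone fun t : ℝ => Real.exp (β * t) * (φ (t + s) - φ t)) :
    Monotone fun t : ℝ => f (seg τ φ t) + β * φ t := by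
  intro t₁ t₂ h12
  rcases eq_or_lt_of_le h12 with rfl | hlt
  · exact le_refl _
  have h0 : ∀ x, 0 ≤ φ x := by
    intro x
    refine le_of_tendsto hφ₀ ?_
    filter_upwards [eventually_le_atBot x] with y hy using hφm hy
  have hK' : ∀ x, φ x ≤ K := by
    intro x
    refine ge_of_tendsto hφK ?_
    filter_upwards [eventually_ge_atTop x] with y hy using hφm hy
  have hc : ∀ t, Continuous (seg τ φ t) := fun t =>
    hφc.comp (continuous_const.add continuous_subtype_val)
  have hbnd : ∀ s, 0 ≤ seg τ φ t₁ s ∧ seg τ φ t₁ s ≤ seg τ φ t₂ s ∧ seg τ φ t₂ s ≤ K := by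
    intro s
    exact ⟨h0 _, hφm (by linarith [s.2.1]), hK' _⟩
  have hmono : Monotone (fun s : Set.Icc (-τ) (0:ℝ) =>
      Real.exp (β * s.1) * (seg τ φ t₂ s - seg τ φ t₁ s)) := by
    have hs : 0 < t₂ - t₁ := by linarith
    have h := hφΓ (t₂ - t₁) hs
    intro a b hab
    have hab' : (a : ℝ) ≤ b := hab
    have key := h (show t₁ + a.1 ≤ t₁ + b.1 by linarith)
    simp only at key
    have e1 : t₁ + (a:ℝ) + (t₂ - t₁) = t₂ + a.1 := by ring
    have e2 : t₁ + (b:ℝ) + (t₂ - t₁) = t₂ + b.1 := by ring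
    rw [e1, e2] at key
    have ep : 0 < Real.exp (β * t₁) := Real.exp_pos _
    simp only [seg]
    have := mul_le_mul_of_nonneg_left key (le_of_lt (Real.exp_pos (-(β * t₁))))
    calc Real.exp (β * a.1) * (φ (t₂ + a.1) - φ (t₁ + a.1))
        = Real.exp (-(β * t₁)) * (Real.exp (β * (t₁ + a.1)) * (φ (t₂ + a.1) - φ (t₁ + a.1))) := by
          rw [← mul_assoc, ← Real.exp_add]; ring_nf
      _ ≤ Real.exp (-(β * t₁)) * (Real.exp (β * (t₁ + b.1)) * (φ (t₂ + b.1) - φ (t₁ + b.1))) := this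
      _ = Real.exp (β * b.1) * (φ (t₂ + b.1) - φ (t₁ + b.1)) := by
          rw [← mul_assoc, ← Real.exp_add]; ring_nf
  have := hH2 (seg τ φ t₂) (seg τ φ t₁) (hc _) (hc _) hbnd hmono
  simp only [seg, add_zero] at this
  simp only [seg]
  linarith
end

section
/- Suppose (H1) and (H2) hold with β > 0, and let φ̄ ∈ Γ be an upper solution of −u'(t) + f(u_t) = 0. Define x₁(t) = ∫_{−∞}^{t} e^{−β(t−s)} H(φ̄)(s) ds for t ∈ ℝ. Then x₁ belongs to the profile set Γ; that is, x₁ is non-decreasing, lim_{t→−∞} x₁(t) = 0, lim_{t→+∞} x₁(t) = K, and for every s > 0 the function t ↦ e^{βt}(x₁(t+s) − x₁(t)) is non-decreasing on ℝ. -/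
/-!
Writing `H = H(φ̄)`, we have `x₁(t) = ∫_{u ≤ 0} e^{βu} H(t + u) du`. Hypothesis (H2), applied to
the segments `φ̄_{t₂} ≥ φ̄_{t₁}` (whose weighted difference is monotone because `φ̄ ∈ Γ`), makes `H`
non-decreasing, and (H1) gives `H → 0` at `-∞` and `H → βK` at `+∞`, since the segments of `φ̄`
converge uniformly to the constants `0` and `K`. Dominated convergence then yields the limits
`0` and `βK / β = K` of `x₁`, and the `Γ`-condition for `x₁` follows from
`e^{βt}(x₁(t+s) − x₁(t)) = ∫_{r ≤ t} e^{βr}(H(r+s) − H(r)) dr`, an integral of a non-negative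
function over a growing domain.
-/

open Real Filter MeasureTheory

open Set Topology

lemma integral_Iic_zero_comp_const_add (F : ℝ → ℝ) (t : ℝ) :
    ∫ u in Iic 0, F (t + u) = ∫ r in Iic t, F r := by
  have := (measurePreserving_add_left volume t).setIntegral_preimage_emb
    (measurableEmbedding_addLeft t) F (Iic t)
  rwa [preimage_const_add_Iic, sub_self] at this

noncomputable def expSmoothing (β : ℝ) (g : ℝ → ℝ) (t : ℝ) : ℝ :=
  ∫ s in Iic t, exp (-β * (t - s)) * g s

lemma expSmoothing_eq_integral_Iic_zero (β : ℝ) (g : ℝ → ℝ) (t : ℝ) :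
    expSmoothing β g t = ∫ u in Iic 0, exp (β * u) * g (t + u) := by
  rw [expSmoothing, ← integral_Iic_zero_comp_const_add]
  congr 1 with u
  ring_nf

section ExpSmoothing

variable {β C : ℝ} {g : ℝ → ℝ}

lemma norm_exp_mul_mul_le (hC : ∀ t, |g t| ≤ C) (u x : ℝ) :
    ‖exp (β * u) * g x‖ ≤ exp (β * u) * C := by
  rw [norm_mul, norm_of_nonneg (exp_pos _).le, norm_eq_abs]
  exact mul_le_mul_of_nonneg_left (hC x) (exp_pos _).le

lemma integrableOn_exp_mul_mul_Iic (hβ : 0 < β) (hg : Measurable g) (hC : ∀ t, |g t| ≤ C)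
    (c : ℝ) : IntegrableOn (fun u => exp (β * u) * g u) (Iic c) :=
  ((integrableOn_exp_mul_Iic hβ c).mul_const C).mono'
    ((measurable_const.mul measurable_id).exp.mul hg).aestronglyMeasurable
    (Eventually.of_forall fun u => norm_exp_mul_mul_le hC u u)

lemma integrableOn_exp_mul_mul_comp_const_add_Iic (hβ : 0 < β) (hg : Measurable g)
    (hC : ∀ t, |g t| ≤ C) (t c : ℝ) :
    IntegrableOn (fun u => exp (β * u) * g (t + u)) (Iic c) :=
  integrableOn_exp_mul_mul_Iic hβ (hg.comp (measurable_const_add t)) (fun _ => hC _) c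

lemma continuous_expSmoothing (hβ : 0 < β) (hg : Continuous g) (hC : ∀ t, |g t| ≤ C) :
    Continuous (expSmoothing β g) := by
  simp only [funext (expSmoothing_eq_integral_Iic_zero β g)]
  exact continuous_of_dominated
    (fun t => (integrableOn_exp_mul_mul_comp_const_add_Iic hβ hg.measurable hC t 0).1)
    (fun t => Eventually.of_forall fun u => norm_exp_mul_mul_le hC u _)
    ((integrableOn_exp_mul_Iic hβ 0).mul_const C)
    (Eventually.of_forall fun u => by fun_prop)

lemma monotone_expSmoothing (hβ : 0 < β) (hg : Measurable g) (hC : ∀ t, |g t| ≤ C)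
    (hmono : Monotone g) : Monotone (expSmoothing β g) := by
  intro t₁ t₂ hle
  simp only [expSmoothing_eq_integral_Iic_zero]
  exact setIntegral_mono
    (integrableOn_exp_mul_mul_comp_const_add_Iic hβ hg hC t₁ 0)
    (integrableOn_exp_mul_mul_comp_const_add_Iic hβ hg hC t₂ 0)
    fun u => mul_le_mul_of_nonneg_left (hmono (by linarith)) (exp_pos _).le

lemma tendsto_expSmoothing (hβ : 0 < β) (hg : Measurable g) (hC : ∀ t, |g t| ≤ C)
    {l : Filter ℝ} [l.IsCountablyGenerated] (hl : ∀ u, Tendsto (fun t => t + u) l l) {a : ℝ}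
    (hlim : Tendsto g l (𝓝 a)) : Tendsto (expSmoothing β g) l (𝓝 (a / β)) := by
  have hint : ∫ u in Iic 0, exp (β * u) * a = a / β := by
    rw [integral_mul_const, integral_exp_mul_Iic hβ, mul_zero, exp_zero, one_div_mul_eq_div]
  simp only [funext (expSmoothing_eq_integral_Iic_zero β g), ← hint]
  exact tendsto_integral_filter_of_dominated_convergence _
    (Eventually.of_forall fun t => (integrableOn_exp_mul_mul_comp_const_add_Iic hβ hg hC t 0).1)
    (Eventually.of_forall fun t => Eventually.of_forall fun u => norm_exp_mul_mul_le hC u _)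
    ((integrableOn_exp_mul_Iic hβ 0).mul_const C)
    (Eventually.of_forall fun u => (hlim.comp (hl u)).const_mul _)

lemma exp_mul_expSmoothing_add_sub (hβ : 0 < β) (hg : Measurable g) (hC : ∀ t, |g t| ≤ C)
    (t s : ℝ) :
    exp (β * t) * (expSmoothing β g (t + s) - expSmoothing β g t) =
      ∫ r in Iic t, exp (β * r) * (g (r + s) - g r) := by
  rw [← integral_Iic_zero_comp_const_add, expSmoothing_eq_integral_Iic_zero,
    expSmoothing_eq_integral_Iic_zero,
    ← integral_sub (integrableOn_exp_mul_mul_comp_const_add_Iic hβ hg hC _ 0)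
      (integrableOn_exp_mul_mul_comp_const_add_Iic hβ hg hC _ 0),
    ← integral_const_mul]
  congr 1 with u
  rw [mul_add, exp_add, add_right_comm t u s]
  ring

lemma monotone_exp_mul_expSmoothing_add_sub (hβ : 0 < β) (hg : Measurable g)
    (hC : ∀ t, |g t| ≤ C) (hmono : Monotone g) {s : ℝ} (hs : 0 ≤ s) :
    Monotone fun t => exp (β * t) * (expSmoothing β g (t + s) - expSmoothing β g t) := by
  intro t₁ t₂ hle
  simp only [exp_mul_expSmoothing_add_sub hβ hg hC]
  have hint : IntegrableOn (fun r => exp (β * r) * (g (r + s) - g r)) (Iic t₂) :=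
    integrableOn_exp_mul_mul_Iic hβ ((hg.comp (measurable_add_const s)).sub hg)
      (fun r => (abs_sub _ _).trans (add_le_add (hC _) (hC _))) t₂
  exact setIntegral_mono_set hint
    (Eventually.of_forall fun r => mul_nonneg (exp_pos _).le (sub_nonneg.2 (hmono (by linarith))))
    (Iic_subset_Iic.2 hle).eventuallyLE

end ExpSmoothing

section Segments

variable {τ : ℝ} {u : ℝ → ℝ}

def segPath (τ : ℝ) (hu : Continuous u) : C(ℝ, C(Icc (-τ) (0 : ℝ), ℝ)) :=
  ContinuousMap.curry ⟨fun p => u (p.1 + p.2.1), by fun_prop⟩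

lemma tendsto_segPath_atTop (hu : Continuous u) {L : ℝ} (h : Tendsto u atTop (𝓝 L)) :
    Tendsto (segPath τ hu) atTop (𝓝 (ContinuousMap.const _ L)) := by
  refine Metric.tendsto_nhds.2 fun ε hε => ?_
  obtain ⟨N, hN⟩ := eventually_atTop.1 (Metric.tendsto_nhds.1 h (ε / 2) (half_pos hε))
  filter_upwards [eventually_ge_atTop (N + τ)] with t ht
  refine lt_of_le_of_lt ?_ (half_lt_self hε)
  exact (ContinuousMap.dist_le (half_pos hε).le).2 fun s => (hN _ (by linarith [s.2.1])).le

lemma tendsto_segPath_atBot (hu : Continuous u) {L : ℝ} (h : Tendsto u atBot (𝓝 L)) :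
    Tendsto (segPath τ hu) atBot (𝓝 (ContinuousMap.const _ L)) := by
  refine Metric.tendsto_nhds.2 fun ε hε => ?_
  obtain ⟨N, hN⟩ := eventually_atBot.1 (Metric.tendsto_nhds.1 h (ε / 2) (half_pos hε))
  filter_upwards [eventually_le_atBot N] with t ht
  refine lt_of_le_of_lt ?_ (half_lt_self hε)
  exact (ContinuousMap.dist_le (half_pos hε).le).2 fun s => (hN _ (by linarith [s.2.2])).le

end Segments

noncomputable def operatorH (τ : ℝ) (f : (Icc (-τ) (0 : ℝ) → ℝ) → ℝ) (β : ℝ) (u : ℝ → ℝ)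
    (t : ℝ) : ℝ :=
  f (seg τ u t) + β * u t

section OperatorH

variable {τ β : ℝ} {f : (Icc (-τ) (0 : ℝ) → ℝ) → ℝ} {u : ℝ → ℝ}

lemma continuous_operatorH (hf : Continuous fun φ : C(Icc (-τ) (0 : ℝ), ℝ) => f ⇑φ)
    (hu : Continuous u) : Continuous (operatorH τ f β u) :=
  (hf.comp (segPath τ hu).continuous).add (continuous_const.mul hu)

lemma tendsto_operatorH_atTop (hf : Continuous fun φ : C(Icc (-τ) (0 : ℝ), ℝ) => f ⇑φ)
    (hu : Continuous u) {L : ℝ} (h : Tendsto u atTop (𝓝 L)) :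
    Tendsto (operatorH τ f β u) atTop (𝓝 (f (fun _ => L) + β * L)) :=
  ((hf.tendsto _).comp (tendsto_segPath_atTop hu h)).add (h.const_mul β)

lemma tendsto_operatorH_atBot (hf : Continuous fun φ : C(Icc (-τ) (0 : ℝ), ℝ) => f ⇑φ)
    (hu : Continuous u) {L : ℝ} (h : Tendsto u atBot (𝓝 L)) :
    Tendsto (operatorH τ f β u) atBot (𝓝 (f (fun _ => L) + β * L)) :=
  ((hf.tendsto _).comp (tendsto_segPath_atBot hu h)).add (h.const_mul β)

lemma monotone_operatorH {K : ℝ} (hτ : 0 < τ)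
    (hH2 : ∀ φ ψ : Icc (-τ) (0 : ℝ) → ℝ, Continuous φ → Continuous ψ →
      (∀ s, 0 ≤ ψ s ∧ ψ s ≤ φ s ∧ φ s ≤ K) →
      Monotone (fun s : Icc (-τ) (0 : ℝ) => exp (β * s.1) * (φ s - ψ s)) →
      0 ≤ f φ - f ψ +
        β * (φ ⟨0, right_mem_Icc.mpr (neg_nonpos.mpr hτ.le)⟩ -
             ψ ⟨0, right_mem_Icc.mpr (neg_nonpos.mpr hτ.le)⟩))
    (hu : Continuous u) (hmono : Monotone u) (hu0 : ∀ t, 0 ≤ u t) (huK : ∀ t, u t ≤ K)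
    (hΓ : ∀ s : ℝ, 0 < s → Monotone fun t : ℝ => exp (β * t) * (u (t + s) - u t)) :
    Monotone (operatorH τ f β u) := by
  intro t₁ t₂ hle
  rcases hle.eq_or_lt with rfl | hlt
  · rfl
  have hweighted : Monotone fun s : Icc (-τ) (0 : ℝ) =>
      exp (β * s.1) * (u (t₂ + s.1) - u (t₁ + s.1)) := by
    intro a b hab
    have key := hΓ (t₂ - t₁) (sub_pos.2 hlt) (show t₁ + a.1 ≤ t₁ + b.1 by simpa using hab)
    have hshift : ∀ r, exp (β * (t₁ + r)) * (u (t₁ + r + (t₂ - t₁)) - u (t₁ + r)) =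
        exp (β * t₁) * (exp (β * r) * (u (t₂ + r) - u (t₁ + r))) := fun r => by
      rw [mul_add, exp_add, show t₁ + r + (t₂ - t₁) = t₂ + r by ring, mul_assoc]
    simp only [hshift] at key
    exact le_of_mul_le_mul_left key (exp_pos _)
  have := hH2 (seg τ u t₂) (seg τ u t₁) (segPath τ hu t₂).continuous
    (segPath τ hu t₁).continuous (fun s => ⟨hu0 _, hmono (by linarith), huK _⟩) hweighted
  simp only [seg, add_zero] at this
  simp only [operatorH]
  linarith

end OperatorH

theorem x1_mem_profile_set_general
    (τ : ℝ) (hτ : 0 < τ)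
    (f : (Set.Icc (-τ) (0 : ℝ) → ℝ) → ℝ)
    (hf : Continuous fun φ : C(Set.Icc (-τ) (0 : ℝ), ℝ) => f ⇑φ)
    (K : ℝ)
    -- (H1)
    (hH1₀ : f (fun _ => (0 : ℝ)) = 0) (hH1K : f (fun _ => K) = 0)
    (β : ℝ) (hβ : 0 < β)
    -- (H2)
    (hH2 : ∀ φ ψ : Set.Icc (-τ) (0 : ℝ) → ℝ, Continuous φ → Continuous ψ →
      (∀ s, 0 ≤ ψ s ∧ ψ s ≤ φ s ∧ φ s ≤ K) →
      Monotone (fun s : Set.Icc (-τ) (0 : ℝ) => Real.exp (β * s.1) * (φ s - ψ s)) →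
      0 ≤ f φ - f ψ +
        β * (φ ⟨0, Set.right_mem_Icc.mpr (neg_nonpos.mpr hτ.le)⟩ -
             ψ ⟨0, Set.right_mem_Icc.mpr (neg_nonpos.mpr hτ.le)⟩))
    -- φ̄ ∈ Γ
    (φb : ℝ → ℝ) (hφbc : Continuous φb) (hφbm : Monotone φb)
    (hφb₀ : Tendsto φb atBot (nhds 0)) (hφbK : Tendsto φb atTop (nhds K))
    (hφbΓ : ∀ s : ℝ, 0 < s →
      Monotone fun t : ℝ => Real.exp (β * t) * (φb (t + s) - φb t))
    -- x₁
    (x₁ : ℝ → ℝ)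
    (hx₁ : ∀ t : ℝ, x₁ t =
      ∫ s in Set.Iic t, Real.exp (-β * (t - s)) * (f (seg τ φb s) + β * φb s)) :
    Continuous x₁ ∧ Monotone x₁ ∧
      Tendsto x₁ atBot (nhds 0) ∧ Tendsto x₁ atTop (nhds K) ∧
      ∀ s : ℝ, 0 < s →
        Monotone fun t : ℝ => Real.exp (β * t) * (x₁ (t + s) - x₁ t) := by
  obtain rfl : x₁ = expSmoothing β (operatorH τ f β φb) := funext hx₁
  set H := operatorH τ f β φb
  have hHc : Continuous H := continuous_operatorH hf hφbc
  have hHm : Monotone H := monotone_operatorH hτ hH2 hφbc hφbm (hφbm.le_of_tendsto hφb₀)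
    (hφbm.ge_of_tendsto hφbK) hφbΓ
  have hH_bot : Tendsto H atBot (𝓝 0) := by
    simpa [hH1₀] using tendsto_operatorH_atBot (β := β) hf hφbc hφb₀
  have hH_top : Tendsto H atTop (𝓝 (β * K)) := by
    simpa [hH1K] using tendsto_operatorH_atTop (β := β) hf hφbc hφbK
  have hH_bdd : ∀ t, |H t| ≤ β * K := fun t => by
    rw [abs_of_nonneg (hHm.le_of_tendsto hH_bot t)]
    exact hHm.ge_of_tendsto hH_top t
  refine ⟨continuous_expSmoothing hβ hHc hH_bdd,
    monotone_expSmoothing hβ hHc.measurable hH_bdd hHm, ?_, ?_,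
    fun s hs => monotone_exp_mul_expSmoothing_add_sub hβ hHc.measurable hH_bdd hHm hs.le⟩
  · simpa using tendsto_expSmoothing hβ hHc.measurable hH_bdd
      (fun u => tendsto_atBot_add_const_right _ u tendsto_id) hH_bot
  · simpa [hβ.ne'] using tendsto_expSmoothing hβ hHc.measurable hH_bdd
      (fun u => tendsto_atTop_add_const_right _ u tendsto_id) hH_top

/-- Under (H1) and (H2) with `β > 0`, if `φ̄ ∈ Γ` is an upper solution of
`−u'(t) + f(u_t) = 0` and `x₁(t) = ∫_{−∞}^t e^{−β(t−s)} H(φ̄)(s) ds`, then `x₁`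
belongs to the profile set `Γ`. -/
theorem x1_mem_profile_set
    (τ : ℝ) (hτ : 0 < τ)
    (f : (Set.Icc (-τ) (0 : ℝ) → ℝ) → ℝ)
    (hf : Continuous fun φ : C(Set.Icc (-τ) (0 : ℝ), ℝ) => f ⇑φ)
    (K : ℝ) (hK : 0 < K)
    -- (H1)
    (hH1₀ : f (fun _ => (0 : ℝ)) = 0) (hH1K : f (fun _ => K) = 0)
    (hH1ne : ∀ u : ℝ, 0 < u → u < K → f (fun _ => u) ≠ 0)
    (β : ℝ) (hβ : 0 < β)
    -- (H2)
    (hH2 : ∀ φ ψ : Set.Icc (-τ) (0 : ℝ) → ℝ, Continuous φ → Continuous ψ →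
      (∀ s, 0 ≤ ψ s ∧ ψ s ≤ φ s ∧ φ s ≤ K) →
      Monotone (fun s : Set.Icc (-τ) (0 : ℝ) => Real.exp (β * s.1) * (φ s - ψ s)) →
      0 ≤ f φ - f ψ +
        β * (φ ⟨0, Set.right_mem_Icc.mpr (neg_nonpos.mpr hτ.le)⟩ -
             ψ ⟨0, Set.right_mem_Icc.mpr (neg_nonpos.mpr hτ.le)⟩))
    -- φ̄ ∈ Γ
    (φb : ℝ → ℝ) (hφbc : Continuous φb) (hφbm : Monotone φb)
    (hφb₀ : Tendsto φb atBot (nhds 0)) (hφbK : Tendsto φb atTop (nhds K))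
    (hφbΓ : ∀ s : ℝ, 0 < s →
      Monotone fun t : ℝ => Real.exp (β * t) * (φb (t + s) - φb t))
    -- φ̄ is an upper solution
    (hup : ∃ D : ℝ → ℝ, (∀ᵐ t ∂(volume : Measure ℝ), HasDerivAt φb (D t) t) ∧
      (∃ M : ℝ, ∀ᵐ t ∂(volume : Measure ℝ), |D t| ≤ M) ∧
      (∀ᵐ t ∂(volume : Measure ℝ), f (seg τ φb t) ≤ D t))
    -- x₁
    (x₁ : ℝ → ℝ)
    (hx₁ : ∀ t : ℝ, x₁ t =
      ∫ s in Set.Iic t, Real.exp (-β * (t - s)) * (f (seg τ φb s) + β * φb s)) :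
    Continuous x₁ ∧ Monotone x₁ ∧
      Tendsto x₁ atBot (nhds 0) ∧ Tendsto x₁ atTop (nhds K) ∧
      ∀ s : ℝ, 0 < s →
        Monotone fun t : ℝ => Real.exp (β * t) * (x₁ (t + s) - x₁ t) :=
  x1_mem_profile_set_general τ hτ f hf K hH1₀ hH1K β hβ hH2 φb hφbc hφbm hφb₀ hφbK hφbΓ x₁ hx₁
end

section
/- Suppose (H1) and (H2) hold with β > 0. Let φ̄ ∈ Γ be an upper solution and φ̲ a lower solution of −u'(t) + f(u_t) = 0 satisfying (C1) 0 ≤ φ̲(t) ≤ φ̄(t) ≤ K for all t ∈ ℝ, and (C3) t ↦ e^{βt}(φ̄(t) − φ̲(t)) is non-decreasing on ℝ. Define x₁(t) = ∫_{−∞}^{t} e^{−β(t−s)} H(φ̄)(s) ds. Then both functions t ↦ e^{βt}(φ̄(t) − x₁(t)) and t ↦ e^{βt}(x₁(t) − φ̲(t)) are non-decreasing on ℝ. -/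
/-!
Write `H = H(φ̄)` and `w t = e^{βt} x₁(t)`, so that `w b - w a = ∫_a^b e^{βs} H(s) ds`. Almost
everywhere `(e^{βt} φ̄)' = e^{βt} (φ̄' + β φ̄) ≥ e^{βt} H`, and
`(e^{βt} φ̲)' = e^{βt} (φ̲' + β φ̲) ≤ e^{βt} H(φ̲) ≤ e^{βt} H` by (H2). As the solutions are only
differentiable almost everywhere, these bounds are integrated by one-sided fundamental theorems of
calculus: the monotone function `e^{βt} φ̄` increases by at least the integral of its derivative,
and `e^{βt} φ̲` is the absolutely continuous function `e^{βt} φ̄` (Lipschitz on compact intervals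
by the defining property of `Γ`) minus the monotone function `e^{βt} (φ̄ - φ̲)` of (C3), so it
increases by at most the integral of its derivative.
-/

open Real Filter MeasureTheory Set

theorem MonotoneOn.integral_le_sub_of_le_hasDerivAt {ψ g : ℝ → ℝ} {a b : ℝ} (hab : a ≤ b)
    (hψ : MonotoneOn ψ (Icc a b)) (hg : IntervalIntegrable g volume a b)
    (hle : ∀ᵐ s, s ∈ Icc a b → ∃ d, HasDerivAt ψ d s ∧ g s ≤ d) :
    ∫ s in a..b, g s ≤ ψ b - ψ a := by
  have hψab : 0 ≤ ψ b - ψ a := sub_nonneg.2 (hψ (by simp [hab]) (by simp [hab]) hab)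
  rw [← uIcc_of_le hab] at hψ
  calc ∫ s in a..b, g s ≤ ∫ s in a..b, deriv ψ s := by
        refine intervalIntegral.integral_mono_ae_restrict hab hg hψ.intervalIntegrable_deriv ?_
        filter_upwards [(ae_restrict_iff' measurableSet_Icc).2 hle] with s ⟨d, hd, hgd⟩
        rwa [hd.deriv]
    _ ≤ ψ b - ψ a := hψ.intervalIntegral_deriv_mem_uIcc.2.trans (sup_le hψab le_rfl)

theorem AbsolutelyContinuousOnInterval.sub_le_integral_of_hasDerivAt_le {A ψ g : ℝ → ℝ}
    {a b : ℝ} (hab : a ≤ b) (hA : AbsolutelyContinuousOnInterval A a b)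
    (hAψ : MonotoneOn (A - ψ) (Icc a b)) (hg : IntervalIntegrable g volume a b)
    (hle : ∀ᵐ s, s ∈ Icc a b → ∃ d, HasDerivAt ψ d s ∧ d ≤ g s) :
    ψ b - ψ a ≤ ∫ s in a..b, g s := by
  have hAd : ∀ᵐ s, s ∈ Icc a b → DifferentiableAt ℝ A s := by
    simpa [uIcc_of_le hab] using hA.ae_differentiableAt
  rw [← uIcc_of_le hab] at hAψ
  have hA' := hA.intervalIntegrable_deriv
  have hG' := hAψ.intervalIntegrable_deriv
  have hderiv : ∫ s in a..b, (deriv A s - deriv (A - ψ) s) ≤ ∫ s in a..b, g s := by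
    refine intervalIntegral.integral_mono_ae_restrict hab (hA'.sub hG') hg ?_
    filter_upwards [(ae_restrict_iff' measurableSet_Icc).2 hle,
      (ae_restrict_iff' measurableSet_Icc).2 hAd] with s ⟨d, hψs, hdg⟩ hAs
    rw [(hAs.hasDerivAt.sub hψs).deriv]
    linarith
  have hsing : ∫ s in a..b, deriv (A - ψ) s ≤ (A - ψ) b - (A - ψ) a :=
    hAψ.intervalIntegral_deriv_mem_uIcc.2.trans
      (sup_le (sub_nonneg.2 (hAψ (by simp) (by simp [hab]) hab)) le_rfl)
  rw [intervalIntegral.integral_sub hA' hG', hA.integral_deriv_eq_sub] at hderiv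
  simp only [Pi.sub_apply] at hsing
  linarith

theorem HasDerivAt.exists_sub_le_mul_of_le {φ : ℝ → ℝ} {d T K : ℝ} (hd : HasDerivAt φ d T)
    (hK : ∀ t, φ t ≤ K) : ∃ C, 0 ≤ C ∧ ∀ s, 0 ≤ s → φ (T + s) - φ T ≤ C * s := by
  obtain ⟨c, hc⟩ := hd.isBigO_sub.bound
  obtain ⟨δ, hδ, hball⟩ := Metric.eventually_nhds_iff.1 hc
  refine ⟨max (max c 0) ((K - φ T) / δ), by positivity, fun s hs => ?_⟩
  rcases lt_or_ge s δ with hsδ | hδs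
  · have h := hball (show dist (T + s) T < δ by simpa [abs_of_nonneg hs] using hsδ)
    simp only [Real.norm_eq_abs, add_sub_cancel_left, abs_of_nonneg hs] at h
    calc φ (T + s) - φ T ≤ c * s := (le_abs_self _).trans h
      _ ≤ max (max c 0) ((K - φ T) / δ) * s :=
        mul_le_mul_of_nonneg_right ((le_max_left _ _).trans (le_max_left _ _)) hs
  · calc φ (T + s) - φ T ≤ K - φ T := by linarith [hK (T + s)]
      _ = (K - φ T) / δ * δ := by field_simp
      _ ≤ max (max c 0) ((K - φ T) / δ) * s :=
        mul_le_mul (le_max_right _ _) hδs hδ.le (by positivity)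

theorem sub_le_exp_mul_sub_of_monotone_exp_mul_sub {φ : ℝ → ℝ} {β : ℝ}
    (hΓ : ∀ s, 0 < s → Monotone fun t => exp (β * t) * (φ (t + s) - φ t))
    {r T s : ℝ} (hrT : r ≤ T) (hs : 0 ≤ s) :
    φ (r + s) - φ r ≤ exp (β * (T - r)) * (φ (T + s) - φ T) := by
  rcases hs.eq_or_lt with rfl | hs
  · simp
  have h : exp (β * r) * (φ (r + s) - φ r) ≤ exp (β * T) * (φ (T + s) - φ T) := hΓ s hs hrT
  have : exp (β * T) = exp (β * r) * exp (β * (T - r)) := by rw [← exp_add]; ring_nf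
  rw [this, mul_assoc] at h
  exact le_of_mul_le_mul_left h (exp_pos _)

theorem exists_lipschitzOnWith_Icc_of_monotone_exp_mul_sub {φ : ℝ → ℝ} {β K : ℝ}
    (hβ : 0 ≤ β) (hφ : Monotone φ) (hK : ∀ t, φ t ≤ K)
    (hΓ : ∀ s, 0 < s → Monotone fun t => exp (β * t) * (φ (t + s) - φ t)) (a b : ℝ) :
    ∃ L, LipschitzOnWith L φ (Icc a b) := by
  have : (ae (volume.restrict (Ioi b))).NeBot := ae_restrict_neBot.2 (by simp)
  obtain ⟨T, hbT, hT⟩ : ∃ T ∈ Ioi b, DifferentiableAt ℝ φ T :=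
    ((ae_restrict_mem measurableSet_Ioi).and (ae_restrict_of_ae hφ.ae_differentiableAt)).exists
  obtain ⟨C, hC, hCT⟩ := hT.hasDerivAt.exists_sub_le_mul_of_le hK
  refine ⟨_, LipschitzOnWith.of_le_add_mul' (exp (β * (T - a)) * C) fun x hx y hy => ?_⟩
  rcases le_total x y with hxy | hyx
  · have := hφ hxy
    have : 0 ≤ exp (β * (T - a)) * C * dist x y := by positivity
    linarith
  · have hyT : y ≤ T := hy.2.trans (le_of_lt hbT)
    have h := sub_le_exp_mul_sub_of_monotone_exp_mul_sub hΓ hyT (sub_nonneg.2 hyx)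
    rw [add_sub_cancel] at h
    have hexp : exp (β * (T - y)) ≤ exp (β * (T - a)) :=
      exp_le_exp.2 (mul_le_mul_of_nonneg_left (by linarith [hy.1]) hβ)
    calc φ x ≤ φ y + exp (β * (T - y)) * (C * (x - y)) := by
          nlinarith [hCT (x - y) (sub_nonneg.2 hyx), exp_pos (β * (T - y))]
      _ ≤ φ y + exp (β * (T - a)) * C * dist x y := by
          rw [Real.dist_eq, abs_of_nonneg (sub_nonneg.2 hyx), mul_assoc]
          gcongr

theorem HasDerivAt.exp_mul_mul {φ : ℝ → ℝ} {d β s : ℝ} (h : HasDerivAt φ d s) :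
    HasDerivAt (fun t => Real.exp (β * t) * φ t) (Real.exp (β * s) * (β * φ s + d)) s := by
  have := ((hasDerivAt_id s).const_mul β).exp.fun_mul h
  simp only [id, mul_one] at this
  exact this.congr_deriv (by ring)

section Solutions

variable {β a b : ℝ} {φ G D : ℝ → ℝ}

theorem integral_exp_mul_le_of_le_hasDerivAt (hβ : 0 ≤ β) (hab : a ≤ b) (hφ : Monotone φ)
    (hφ₀ : ∀ t, 0 ≤ φ t) (hG : Continuous G) (hD : ∀ᵐ t, HasDerivAt φ (D t) t)
    (hGD : ∀ᵐ t, G t ≤ D t + β * φ t) :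
    ∫ s in a..b, exp (β * s) * G s ≤ exp (β * b) * φ b - exp (β * a) * φ a := by
  refine MonotoneOn.integral_le_sub_of_le_hasDerivAt (ψ := fun t => exp (β * t) * φ t) hab
    (fun x _ y _ hxy => ?_) ((by fun_prop : Continuous _).intervalIntegrable _ _) ?_
  · exact mul_le_mul (exp_le_exp.2 (by nlinarith)) (hφ hxy) (hφ₀ x) (exp_pos _).le
  · filter_upwards [hD, hGD] with s hs hGs _
    refine ⟨_, HasDerivAt.exp_mul_mul hs, ?_⟩
    nlinarith [exp_pos (β * s)]

theorem exp_mul_sub_le_integral_of_hasDerivAt_le {ψ : ℝ → ℝ} (hab : a ≤ b)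
    (hψ : AbsolutelyContinuousOnInterval ψ a b)
    (hψφ : Monotone fun t => exp (β * t) * (ψ t - φ t)) (hG : Continuous G)
    (hD : ∀ᵐ t, HasDerivAt φ (D t) t) (hDG : ∀ᵐ t, D t + β * φ t ≤ G t) :
    exp (β * b) * φ b - exp (β * a) * φ a ≤ ∫ s in a..b, exp (β * s) * G s := by
  have hexp : AbsolutelyContinuousOnInterval (fun t => exp (β * t)) a b :=
    ContDiffOn.absolutelyContinuousOnInterval (by fun_prop)
  refine (hexp.mul hψ).sub_le_integral_of_hasDerivAt_le (ψ := fun t => exp (β * t) * φ t) hab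
    (fun x _ y _ hxy => ?_) ((by fun_prop : Continuous _).intervalIntegrable _ _) ?_
  · simpa [mul_sub] using hψφ hxy
  · filter_upwards [hD, hDG] with s hs hDs _
    refine ⟨_, HasDerivAt.exp_mul_mul hs, ?_⟩
    nlinarith [exp_pos (β * s)]

end Solutions

theorem exp_mul_integral_Iic_sub_exp_mul_integral_Iic {β C : ℝ} {h : ℝ → ℝ} (hβ : 0 < β)
    (hh : AEStronglyMeasurable h) (hC : ∀ᵐ s, |h s| ≤ C) (a b : ℝ) :
    exp (β * b) * (∫ s in Iic b, exp (-β * (b - s)) * h s)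
      - exp (β * a) * ∫ s in Iic a, exp (-β * (a - s)) * h s
      = ∫ s in a..b, exp (β * s) * h s := by
  have hweight : ∀ t, exp (β * t) * ∫ s in Iic t, exp (-β * (t - s)) * h s
      = ∫ s in Iic t, exp (β * s) * h s := fun t => by
    rw [← integral_const_mul]
    congr 1 with s
    rw [← mul_assoc, ← exp_add]
    ring_nf
  have hint : ∀ t, IntegrableOn (fun s => exp (β * s) * h s) (Iic t) := fun t =>
    (integrableOn_exp_mul_Iic hβ t).mul_bdd hh.restrict (ae_restrict_of_ae hC)
  rw [hweight b, hweight a, intervalIntegral.integral_Iic_sub_Iic (hint a) (hint b)]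

theorem continuous_comp_seg {τ : ℝ} {f : (Icc (-τ) (0 : ℝ) → ℝ) → ℝ}
    (hf : Continuous fun φ : C(Icc (-τ) (0 : ℝ), ℝ) => f ⇑φ) {u : ℝ → ℝ} (hu : Continuous u) :
    Continuous fun t => f (seg τ u t) :=
  hf.comp
    (ContinuousMap.curry ⟨fun p : ℝ × Icc (-τ) (0 : ℝ) => u (p.1 + p.2), by fun_prop⟩).continuous

theorem seg_add_mul_le_of_monotone_exp_mul_sub {τ β K : ℝ} (hτ : 0 < τ)
    {f : (Icc (-τ) (0 : ℝ) → ℝ) → ℝ}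
    (hH2 : ∀ φ ψ : Set.Icc (-τ) (0 : ℝ) → ℝ, Continuous φ → Continuous ψ →
      (∀ s, 0 ≤ ψ s ∧ ψ s ≤ φ s ∧ φ s ≤ K) →
      Monotone (fun s : Set.Icc (-τ) (0 : ℝ) => Real.exp (β * s.1) * (φ s - ψ s)) →
      0 ≤ f φ - f ψ +
        β * (φ ⟨0, Set.right_mem_Icc.mpr (neg_nonpos.mpr hτ.le)⟩ -
             ψ ⟨0, Set.right_mem_Icc.mpr (neg_nonpos.mpr hτ.le)⟩))
    {φ ψ : ℝ → ℝ} (hφ : Continuous φ) (hψ : Continuous ψ)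
    (hψφ : ∀ t, 0 ≤ ψ t ∧ ψ t ≤ φ t ∧ φ t ≤ K)
    (hmono : Monotone fun t => exp (β * t) * (φ t - ψ t)) (t : ℝ) :
    f (seg τ ψ t) + β * ψ t ≤ f (seg τ φ t) + β * φ t := by
  have hseg : Monotone fun u : Icc (-τ) (0 : ℝ) => exp (β * u) * (seg τ φ t u - seg τ ψ t u) := by
    intro u v huv
    have h : exp (β * (t + u)) * (φ (t + u) - ψ (t + u))
        ≤ exp (β * (t + v)) * (φ (t + v) - ψ (t + v)) :=
      hmono (by simpa using Subtype.coe_le_coe.2 huv)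
    simp only [seg]
    have hsplit : ∀ w : ℝ, exp (β * w) = exp (-(β * t)) * exp (β * (t + w)) := fun w => by
      rw [← exp_add]; ring_nf
    rw [hsplit u, hsplit v, mul_assoc, mul_assoc]
    exact mul_le_mul_of_nonneg_left h (exp_pos _).le
  have := hH2 _ _ (by fun_prop) (by fun_prop) (fun u => hψφ _) hseg
  change 0 ≤ f (seg τ φ t) - f (seg τ ψ t) + β * (φ (t + 0) - ψ (t + 0)) at this
  rw [add_zero] at this
  linarith

theorem x1_weighted_differences_monotone_general
    (τ : ℝ) (hτ : 0 < τ)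
    (f : (Set.Icc (-τ) (0 : ℝ) → ℝ) → ℝ)
    (hf : Continuous fun φ : C(Set.Icc (-τ) (0 : ℝ), ℝ) => f ⇑φ)
    (K : ℝ)
    (β : ℝ) (hβ : 0 < β)
    -- (H2)
    (hH2 : ∀ φ ψ : Set.Icc (-τ) (0 : ℝ) → ℝ, Continuous φ → Continuous ψ →
      (∀ s, 0 ≤ ψ s ∧ ψ s ≤ φ s ∧ φ s ≤ K) →
      Monotone (fun s : Set.Icc (-τ) (0 : ℝ) => Real.exp (β * s.1) * (φ s - ψ s)) →
      0 ≤ f φ - f ψ +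
        β * (φ ⟨0, Set.right_mem_Icc.mpr (neg_nonpos.mpr hτ.le)⟩ -
             ψ ⟨0, Set.right_mem_Icc.mpr (neg_nonpos.mpr hτ.le)⟩))
    -- φ̄ ∈ Γ
    (φb : ℝ → ℝ) (hφbc : Continuous φb) (hφbm : Monotone φb)
    (hφbΓ : ∀ s : ℝ, 0 < s →
      Monotone fun t : ℝ => Real.exp (β * t) * (φb (t + s) - φb t))
    -- φ̄ is an upper solution
    (hup : ∃ D : ℝ → ℝ, (∀ᵐ t ∂(volume : Measure ℝ), HasDerivAt φb (D t) t) ∧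
      (∃ M : ℝ, ∀ᵐ t ∂(volume : Measure ℝ), |D t| ≤ M) ∧
      (∀ᵐ t ∂(volume : Measure ℝ), f (seg τ φb t) ≤ D t))
    -- φ̲ is a lower solution satisfying (C1) and (C3)
    (φl : ℝ → ℝ) (hφlc : Continuous φl)
    (hlow : ∃ D : ℝ → ℝ, (∀ᵐ t ∂(volume : Measure ℝ), HasDerivAt φl (D t) t) ∧
      (∃ M : ℝ, ∀ᵐ t ∂(volume : Measure ℝ), |D t| ≤ M) ∧
      (∀ᵐ t ∂(volume : Measure ℝ), D t ≤ f (seg τ φl t)))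
    (hC1 : ∀ t : ℝ, 0 ≤ φl t ∧ φl t ≤ φb t ∧ φb t ≤ K)
    (hC3 : Monotone fun t : ℝ => Real.exp (β * t) * (φb t - φl t))
    -- x₁
    (x₁ : ℝ → ℝ)
    (hx₁ : ∀ t : ℝ, x₁ t =
      ∫ s in Set.Iic t, Real.exp (-β * (t - s)) * (f (seg τ φb s) + β * φb s)) :
    (Monotone fun t : ℝ => Real.exp (β * t) * (φb t - x₁ t)) ∧
      (Monotone fun t : ℝ => Real.exp (β * t) * (x₁ t - φl t)) := by
  obtain ⟨D, hD, ⟨M, hM⟩, hDf⟩ := hup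
  obtain ⟨Dl, hDl, ⟨Ml, hMl⟩, hDlf⟩ := hlow
  have hH := seg_add_mul_le_of_monotone_exp_mul_sub hτ hH2 hφbc hφlc hC1 hC3
  have hHc : Continuous fun s => f (seg τ φb s) + β * φb s :=
    (continuous_comp_seg hf hφbc).add (continuous_const.mul hφbc)
  -- `H(φ̄) ≤ φ̄' + β φ̄ ≤ M + β K`, and `H(φ̄) ≥ H(φ̲) ≥ φ̲' + β φ̲ ≥ -Ml` by (H2).
  have hHbdd : ∀ᵐ s, |f (seg τ φb s) + β * φb s| ≤ M + β * K + Ml := by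
    filter_upwards [hM, hMl, hDf, hDlf] with s hMs hMls hDs hDls
    obtain ⟨hl₀, hlb, hbK⟩ := hC1 s
    rw [abs_le] at hMs hMls ⊢
    constructor <;> nlinarith [hH s]
  have hx₁incr : ∀ a b, exp (β * b) * x₁ b - exp (β * a) * x₁ a
      = ∫ s in a..b, exp (β * s) * (f (seg τ φb s) + β * φb s) := fun a b => by
    simpa only [hx₁] using
      exp_mul_integral_Iic_sub_exp_mul_integral_Iic hβ hHc.aestronglyMeasurable hHbdd a b
  refine ⟨fun a b hab => ?_, fun a b hab => ?_⟩
  · have hupper := integral_exp_mul_le_of_le_hasDerivAt hβ.le hab hφbm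
      (fun t => (hC1 t).1.trans (hC1 t).2.1) hHc hD (hDf.mono fun t ht => by linarith)
    have := hx₁incr a b
    simp only [mul_sub]
    linarith
  · obtain ⟨L, hL⟩ := exists_lipschitzOnWith_Icc_of_monotone_exp_mul_sub hβ.le hφbm
      (fun t => (hC1 t).2.2) hφbΓ a b
    rw [← uIcc_of_le hab] at hL
    have hlower := exp_mul_sub_le_integral_of_hasDerivAt_le hab
      hL.absolutelyContinuousOnInterval hC3 hHc hDl (hDlf.mono fun t ht => by linarith [hH t])
    have := hx₁incr a b
    simp only [mul_sub]
    linarith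

/-- Under (H1) and (H2) with `β > 0`, if `φ̄ ∈ Γ` is an upper solution of
`−u'(t) + f(u_t) = 0`, `φ̲` is a lower solution satisfying (C1) and (C3), and
`x₁(t) = ∫_{−∞}^t e^{−β(t−s)} H(φ̄)(s) ds`, then `t ↦ e^{βt}(φ̄(t) − x₁(t))` and
`t ↦ e^{βt}(x₁(t) − φ̲(t))` are non-decreasing on `ℝ`. -/
theorem x1_weighted_differences_monotone
    (τ : ℝ) (hτ : 0 < τ)
    (f : (Set.Icc (-τ) (0 : ℝ) → ℝ) → ℝ)
    (hf : Continuous fun φ : C(Set.Icc (-τ) (0 : ℝ), ℝ) => f ⇑φ)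
    (K : ℝ) (hK : 0 < K)
    -- (H1)
    (hH1₀ : f (fun _ => (0 : ℝ)) = 0) (hH1K : f (fun _ => K) = 0)
    (hH1ne : ∀ u : ℝ, 0 < u → u < K → f (fun _ => u) ≠ 0)
    (β : ℝ) (hβ : 0 < β)
    -- (H2)
    (hH2 : ∀ φ ψ : Set.Icc (-τ) (0 : ℝ) → ℝ, Continuous φ → Continuous ψ →
      (∀ s, 0 ≤ ψ s ∧ ψ s ≤ φ s ∧ φ s ≤ K) →
      Monotone (fun s : Set.Icc (-τ) (0 : ℝ) => Real.exp (β * s.1) * (φ s - ψ s)) →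
      0 ≤ f φ - f ψ +
        β * (φ ⟨0, Set.right_mem_Icc.mpr (neg_nonpos.mpr hτ.le)⟩ -
             ψ ⟨0, Set.right_mem_Icc.mpr (neg_nonpos.mpr hτ.le)⟩))
    -- φ̄ ∈ Γ
    (φb : ℝ → ℝ) (hφbc : Continuous φb) (hφbm : Monotone φb)
    (hφb₀ : Tendsto φb atBot (nhds 0)) (hφbK : Tendsto φb atTop (nhds K))
    (hφbΓ : ∀ s : ℝ, 0 < s →
      Monotone fun t : ℝ => Real.exp (β * t) * (φb (t + s) - φb t))
    -- φ̄ is an upper solution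
    (hup : ∃ D : ℝ → ℝ, (∀ᵐ t ∂(volume : Measure ℝ), HasDerivAt φb (D t) t) ∧
      (∃ M : ℝ, ∀ᵐ t ∂(volume : Measure ℝ), |D t| ≤ M) ∧
      (∀ᵐ t ∂(volume : Measure ℝ), f (seg τ φb t) ≤ D t))
    -- φ̲ is a lower solution satisfying (C1) and (C3)
    (φl : ℝ → ℝ) (hφlc : Continuous φl)
    (hlow : ∃ D : ℝ → ℝ, (∀ᵐ t ∂(volume : Measure ℝ), HasDerivAt φl (D t) t) ∧
      (∃ M : ℝ, ∀ᵐ t ∂(volume : Measure ℝ), |D t| ≤ M) ∧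
      (∀ᵐ t ∂(volume : Measure ℝ), D t ≤ f (seg τ φl t)))
    (hC1 : ∀ t : ℝ, 0 ≤ φl t ∧ φl t ≤ φb t ∧ φb t ≤ K)
    (hC3 : Monotone fun t : ℝ => Real.exp (β * t) * (φb t - φl t))
    -- x₁
    (x₁ : ℝ → ℝ)
    (hx₁ : ∀ t : ℝ, x₁ t =
      ∫ s in Set.Iic t, Real.exp (-β * (t - s)) * (f (seg τ φb s) + β * φb s)) :
    (Monotone fun t : ℝ => Real.exp (β * t) * (φb t - x₁ t)) ∧
      (Monotone fun t : ℝ => Real.exp (β * t) * (x₁ t - φl t)) :=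
  x1_weighted_differences_monotone_general τ hτ f hf K β hβ hH2 φb hφbc hφbm hφbΓ hup φl hφlc hlow
    hC1 hC3 x₁ hx₁
end

section
/- Assume δ, H, ρ, σ, r > 0 with σ ≤ r, 1 < ρ/(δ+H) ≤ e, and set κ = ln(ρ/(δ+H)) and τ = max{σ, r}. Let β ≥ 0 satisfy δ + H e^{βσ} ≤ β. Then the functional f(φ) = −δφ(0) − Hφ(−σ) + ρφ(−r)e^{−φ(−r)} satisfies the exponential quasi-monotonicity condition: for all φ, ψ ∈ C([−τ,0],ℝ) with 0 ≤ ψ(s) ≤ φ(s) ≤ κ for all s ∈ [−τ,0] and such that s ↦ e^{βs}(φ(s) − ψ(s)) is non-decreasing on [−τ,0], one has f(φ) − f(ψ) + β(φ(0) − ψ(0)) ≥ 0. -/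
open Real Filter

/-- `x ↦ x e^{-x}` is monotone on `[0,1]`. -/
lemma xexp_mono {a b : ℝ} (ha : 0 ≤ a) (hab : a ≤ b) (hb : b ≤ 1) :
    a * Real.exp (-a) ≤ b * Real.exp (-b) := by
  have h1 : a - b + 1 ≤ Real.exp (a - b) := Real.add_one_le_exp (a - b)
  have h2 : b * (a - b + 1) ≤ b * Real.exp (a - b) :=
    mul_le_mul_of_nonneg_left h1 (le_trans ha hab)
  have h3 : a ≤ b * (a - b + 1) := by nlinarith
  have h4 : a ≤ b * Real.exp (a - b) := le_trans h3 h2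
  have h5 : Real.exp (a - b) = Real.exp (-b) * Real.exp a := by
    rw [← Real.exp_add]; ring_nf
  have hea : 0 < Real.exp a := Real.exp_pos a
  rw [h5] at h4
  calc a * Real.exp (-a) ≤ (b * (Real.exp (-b) * Real.exp a)) * Real.exp (-a) := by
        exact mul_le_mul_of_nonneg_right h4 (Real.exp_pos _).le
    _ = b * Real.exp (-b) * (Real.exp a * Real.exp (-a)) := by ring
    _ = b * Real.exp (-b) := by rw [← Real.exp_add]; simp

/-- The functional `f(φ) = −δφ(0) − Hφ(−σ) + ρφ(−r)e^{−φ(−r)}` associated with the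
Nicholson equation with harvesting satisfies the exponential quasi-monotonicity
condition (H2) on `[−τ,0]`, `τ = max{σ,r}`, whenever `δ + H e^{βσ} ≤ β`. -/
theorem nicholson_quasi_monotonicity
    (δ H ρ σ r : ℝ)
    (hδ : 0 < δ) (hH : 0 < H) (hρ : 0 < ρ) (hσ : 0 < σ) (hr : 0 < r)
    (hσr : σ ≤ r)
    (hratio₁ : 1 < ρ / (δ + H)) (hratio₂ : ρ / (δ + H) ≤ Real.exp 1)
    (κ τ : ℝ) (hκ : κ = Real.log (ρ / (δ + H))) (hτ : τ = max σ r)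
    (β : ℝ) (hβ : 0 ≤ β) (hβ' : δ + H * Real.exp (β * σ) ≤ β) :
    ∀ φ ψ : ℝ → ℝ,
      ContinuousOn φ (Set.Icc (-τ) 0) → ContinuousOn ψ (Set.Icc (-τ) 0) →
      (∀ s ∈ Set.Icc (-τ) (0 : ℝ), 0 ≤ ψ s ∧ ψ s ≤ φ s ∧ φ s ≤ κ) →
      MonotoneOn (fun s : ℝ => Real.exp (β * s) * (φ s - ψ s)) (Set.Icc (-τ) 0) →
      0 ≤ (-δ * φ 0 - H * φ (-σ) + ρ * φ (-r) * Real.exp (-(φ (-r)))) -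
          (-δ * ψ 0 - H * ψ (-σ) + ρ * ψ (-r) * Real.exp (-(ψ (-r)))) +
          β * (φ 0 - ψ 0) := by
  intro φ ψ _ _ hbnd hmono
  have hτr : τ = r := by rw [hτ]; exact max_eq_right hσr
  have hκ1 : κ ≤ 1 := by
    rw [hκ]
    calc Real.log (ρ / (δ + H)) ≤ Real.log (Real.exp 1) :=
          Real.log_le_log (by positivity) hratio₂
      _ = 1 := Real.log_exp 1
  have hmσ : -σ ∈ Set.Icc (-τ) (0 : ℝ) := by
    constructor <;> [rw [hτr]; skip] <;> linarith
  have hmr : -r ∈ Set.Icc (-τ) (0 : ℝ) := by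
    constructor <;> [rw [hτr]; skip] <;> linarith
  have h0 : (0:ℝ) ∈ Set.Icc (-τ) (0 : ℝ) := by
    constructor <;> [rw [hτr]; skip] <;> linarith
  obtain ⟨hψσ, hψφσ, hφσ⟩ := hbnd _ hmσ
  obtain ⟨hψr, hψφr, hφr⟩ := hbnd _ hmr
  obtain ⟨hψ0, hψφ0, hφ0⟩ := hbnd _ h0
  -- nonlinear part is monotone
  have hnl : ψ (-r) * Real.exp (-(ψ (-r))) ≤ φ (-r) * Real.exp (-(φ (-r))) :=
    xexp_mono hψr hψφr (le_trans hφr hκ1)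
  -- monotonicity from -σ to 0
  have hm := hmono hmσ h0 (by linarith)
  simp only [mul_zero, Real.exp_zero, one_mul] at hm
  -- so exp(βσ)-scaled inequality: φ(-σ)-ψ(-σ) ≤ exp(βσ)·(φ 0 - ψ 0)
  have hE : Real.exp (β * -σ) * (φ (-σ) - ψ (-σ)) ≤ φ 0 - ψ 0 := hm
  have hEpos : 0 < Real.exp (β * σ) := Real.exp_pos _
  have key : φ (-σ) - ψ (-σ) ≤ Real.exp (β * σ) * (φ 0 - ψ 0) := by
    have := mul_le_mul_of_nonneg_left hE hEpos.le
    have hmul : Real.exp (β * σ) * (Real.exp (β * -σ) * (φ (-σ) - ψ (-σ)))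
        = φ (-σ) - ψ (-σ) := by
      rw [← mul_assoc, ← Real.exp_add]
      simp
    linarith [hmul ▸ this]
  have hu0 : 0 ≤ φ 0 - ψ 0 := by linarith
  have hH' : H * (φ (-σ) - ψ (-σ)) ≤ (β - δ) * (φ 0 - ψ 0) := by
    calc H * (φ (-σ) - ψ (-σ)) ≤ H * (Real.exp (β * σ) * (φ 0 - ψ 0)) :=
          mul_le_mul_of_nonneg_left key hH.le
      _ = (H * Real.exp (β * σ)) * (φ 0 - ψ 0) := by ring
      _ ≤ (β - δ) * (φ 0 - ψ 0) := by
          apply mul_le_mul_of_nonneg_right _ hu0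
          linarith
  nlinarith [mul_le_mul_of_nonneg_left hnl hρ.le]
end

section
/- Assume δ, H, ρ > 0, 1 < ρ/(δ+H) ≤ e, 0 < σ < r, and set κ = ln(ρ/(δ+H)). Let λ > 0 satisfy −λ − δ − H e^{−σλ} + ρ e^{−rλ} = 0 and let μ > 0 satisfy μ − δ − H e^{σμ} ≥ 0. Define φ̄ : ℝ → ℝ by φ̄(t) = (μ/(μ+λ)) κ e^{λt} for t ≤ 0 and φ̄(t) = κ(1 − (λ/(μ+λ)) e^{−μt}) for t > 0. Then φ̄ is an upper solution of the Nicholson equation with harvesting: φ̄ is continuous, differentiable at every t ≠ 0, and −φ̄'(t) − δ φ̄(t) − H φ̄(t−σ) + ρ φ̄(t−r) e^{−φ̄(t−r)} ≤ 0 for all t ≠ 0. -/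
open Real Filter

/-! On `t ≤ 0` the function `φ̄` is the exponential `a κ e^{λt}` and on `t > 0` the saturating
curve `κ (1 - b e^{-μt})`, with `a = μ/(μ+λ)`, `b = λ/(μ+λ)`. Since `a + b = 1` and `aλ = bμ`,
convexity of `exp` gives `κ (1 - b e^{-μs}) ≤ φ̄ s ≤ a κ e^{λs}` for every `s`.
For `t < 0` the nonlinearity is bounded by `ρ φ̄(t - r) ≤ ρ a κ e^{λ(t-r)}`, and the residual
collapses to `a κ e^{λt}` times the characteristic expression, which vanishes.
For `t > 0` we use `0 ≤ φ̄ ≤ κ ≤ 1`, so that `ρ x e^{-x} ≤ ρ κ e^{-κ} = (δ + H) κ`; together with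
the lower bound on `φ̄(t - σ)` the residual is at most `κ b e^{-μt} (δ + H e^{σμ} - μ) ≤ 0`. -/

/-- The residual of the Nicholson equation with harvesting; `φ` is an upper solution where it is
nonpositive. -/
noncomputable def nicholsonResidual (δ H ρ σ r : ℝ) (φ : ℝ → ℝ) (t : ℝ) : ℝ :=
  -deriv φ t - δ * φ t - H * φ (t - σ) + ρ * φ (t - r) * exp (-(φ (t - r)))

noncomputable def upperSol (κ lam μ : ℝ) (t : ℝ) : ℝ :=
  if t ≤ 0 then μ / (μ + lam) * κ * exp (lam * t)
  else κ * (1 - lam / (μ + lam) * exp (-μ * t))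

lemma one_le_mul_exp_add_mul_exp {a b p q : ℝ} (ha : 0 ≤ a) (hb : 0 ≤ b) (hab : a + b = 1)
    (hpq : a * p + b * q = 0) : 1 ≤ a * exp p + b * exp q := by
  nlinarith [mul_le_mul_of_nonneg_left (add_one_le_exp p) ha,
    mul_le_mul_of_nonneg_left (add_one_le_exp q) hb]

lemma mul_exp_neg_le_mul_exp_neg {x k : ℝ} (hx : x ≤ k) (hk₀ : 0 ≤ k) (hk₁ : k ≤ 1) :
    x * exp (-x) ≤ k * exp (-k) := by
  have hx_le : x ≤ k * exp (-(k - x)) := by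
    nlinarith [mul_le_mul_of_nonneg_left (add_one_le_exp (-(k - x))) hk₀]
  calc x * exp (-x) ≤ k * exp (-(k - x)) * exp (-x) :=
        mul_le_mul_of_nonneg_right hx_le (exp_pos _).le
    _ = k * exp (-k) := by rw [mul_assoc, ← exp_add]; ring_nf

namespace upperSol

variable {κ lam μ : ℝ}

lemma of_nonpos {t : ℝ} (ht : t ≤ 0) :
    upperSol κ lam μ t = μ / (μ + lam) * κ * exp (lam * t) := if_pos ht

lemma of_pos {t : ℝ} (ht : 0 < t) :
    upperSol κ lam μ t = κ * (1 - lam / (μ + lam) * exp (-μ * t)) := if_neg ht.not_ge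

section Bounds

variable (hκ : 0 ≤ κ) (hlam : 0 < lam) (hμ : 0 < μ)
include hκ hlam hμ

omit hκ in
lemma one_le_branches (s : ℝ) :
    1 ≤ μ / (μ + lam) * exp (lam * s) + lam / (μ + lam) * exp (-μ * s) :=
  one_le_mul_exp_add_mul_exp (by positivity) (by positivity) (by field_simp) (by field_simp; ring)

lemma le_left_branch (s : ℝ) : upperSol κ lam μ s ≤ μ / (μ + lam) * κ * exp (lam * s) := by
  rcases le_or_gt s 0 with hs | hs
  · exact (of_nonpos hs).le
  · rw [of_pos hs]
    nlinarith [mul_le_mul_of_nonneg_left (one_le_branches hlam hμ s) hκ]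

lemma right_branch_le (s : ℝ) : κ * (1 - lam / (μ + lam) * exp (-μ * s)) ≤ upperSol κ lam μ s := by
  rcases le_or_gt s 0 with hs | hs
  · rw [of_nonpos hs]
    nlinarith [mul_le_mul_of_nonneg_left (one_le_branches hlam hμ s) hκ]
  · exact (of_pos hs).ge

lemma nonneg (s : ℝ) : 0 ≤ upperSol κ lam μ s := by
  rcases le_or_gt s 0 with hs | hs
  · rw [of_nonpos hs]; positivity
  · have hb : lam / (μ + lam) ≤ 1 := (div_le_one (by positivity)).mpr (by linarith)
    have hexp : exp (-μ * s) ≤ 1 := exp_le_one_iff.mpr (by nlinarith)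
    rw [of_pos hs]
    exact mul_nonneg hκ (sub_nonneg.mpr (mul_le_one₀ hb (exp_pos _).le hexp))

lemma le_kappa (s : ℝ) : upperSol κ lam μ s ≤ κ := by
  rcases le_or_gt s 0 with hs | hs
  · have ha : μ / (μ + lam) ≤ 1 := (div_le_one (by positivity)).mpr (by linarith)
    have hexp : exp (lam * s) ≤ 1 := exp_le_one_iff.mpr (by nlinarith)
    rw [of_nonpos hs]
    calc μ / (μ + lam) * κ * exp (lam * s) ≤ 1 * κ * 1 := by gcongr
      _ = κ := by ring
  · rw [of_pos hs]
    have : 0 ≤ lam / (μ + lam) * exp (-μ * s) := by positivity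
    nlinarith

end Bounds

lemma continuous (hμ : 0 < μ) (hlam : 0 < lam) : Continuous (upperSol κ lam μ) :=
  Continuous.if_le (by fun_prop) (by fun_prop) continuous_id continuous_const fun t ht => by
    subst ht
    rw [mul_zero, mul_zero, exp_zero]
    field_simp
    ring

lemma hasDerivAt_of_neg {t : ℝ} (ht : t < 0) :
    HasDerivAt (upperSol κ lam μ) (μ / (μ + lam) * κ * (lam * exp (lam * t))) t := by
  have hev : upperSol κ lam μ =ᶠ[nhds t] fun s => μ / (μ + lam) * κ * exp (lam * s) := by
    filter_upwards [Iio_mem_nhds ht] with s hs using of_nonpos hs.le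
  refine HasDerivAt.congr_of_eventuallyEq ?_ hev
  exact ((hasDerivAt_id' t).const_mul lam).exp.const_mul _ |>.congr_deriv (by ring)

lemma hasDerivAt_of_pos {t : ℝ} (ht : 0 < t) :
    HasDerivAt (upperSol κ lam μ) (κ * (lam / (μ + lam) * (μ * exp (-μ * t)))) t := by
  have hev : upperSol κ lam μ =ᶠ[nhds t] fun s => κ * (1 - lam / (μ + lam) * exp (-μ * s)) := by
    filter_upwards [Ioi_mem_nhds ht] with s hs using of_pos hs
  refine HasDerivAt.congr_of_eventuallyEq ?_ hev
  exact ((((hasDerivAt_id' t).const_mul (-μ)).exp.const_mul _).const_sub 1).const_mul κ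
    |>.congr_deriv (by ring)

end upperSol

section Residual

variable {δ H ρ σ r κ lam μ : ℝ} (hκ : 0 ≤ κ) (hlam : 0 < lam) (hμ : 0 < μ) (hρ : 0 ≤ ρ)
include hκ hlam hμ hρ

lemma nicholsonResidual_upperSol_nonpos_of_neg (hσ : 0 ≤ σ)
    (hchar : -lam - δ - H * exp (-σ * lam) + ρ * exp (-r * lam) = 0) {t : ℝ} (ht : t < 0) :
    nicholsonResidual δ H ρ σ r (upperSol κ lam μ) t ≤ 0 := by
  set x := upperSol κ lam μ (t - r)
  have hx : 0 ≤ x := upperSol.nonneg hκ hlam hμ _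
  have hfeedback : ρ * x * exp (-x) ≤ ρ * (μ / (μ + lam) * κ * exp (lam * (t - r))) := by
    calc ρ * x * exp (-x) ≤ ρ * x * 1 := by gcongr; exact exp_le_one_iff.mpr (by linarith)
      _ ≤ _ := by
        rw [mul_one]
        exact mul_le_mul_of_nonneg_left (upperSol.le_left_branch hκ hlam hμ _) hρ
  have hsplit : ∀ c, exp (lam * (t - c)) = exp (lam * t) * exp (-c * lam) := fun c => by
    rw [← exp_add]; ring_nf
  unfold nicholsonResidual
  rw [(upperSol.hasDerivAt_of_neg ht).deriv, upperSol.of_nonpos ht.le,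
    upperSol.of_nonpos (by linarith : t - σ ≤ 0)]
  calc _ ≤ -(μ / (μ + lam) * κ * (lam * exp (lam * t))) - δ * (μ / (μ + lam) * κ * exp (lam * t))
        - H * (μ / (μ + lam) * κ * exp (lam * (t - σ)))
        + ρ * (μ / (μ + lam) * κ * exp (lam * (t - r))) := by linarith
    _ = μ / (μ + lam) * κ * exp (lam * t) *
          (-lam - δ - H * exp (-σ * lam) + ρ * exp (-r * lam)) := by
        rw [hsplit σ, hsplit r]; ring
    _ = 0 := by rw [hchar, mul_zero]

lemma nicholsonResidual_upperSol_nonpos_of_pos (hH : 0 ≤ H) (hκ₁ : κ ≤ 1)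
    (hκρ : ρ * exp (-κ) = δ + H) (hμ' : 0 ≤ μ - δ - H * exp (σ * μ)) {t : ℝ} (ht : 0 < t) :
    nicholsonResidual δ H ρ σ r (upperSol κ lam μ) t ≤ 0 := by
  set x := upperSol κ lam μ (t - r)
  have hfeedback : ρ * x * exp (-x) ≤ (δ + H) * κ := by
    calc ρ * x * exp (-x) = ρ * (x * exp (-x)) := mul_assoc _ _ _
      _ ≤ ρ * (κ * exp (-κ)) := mul_le_mul_of_nonneg_left
          (mul_exp_neg_le_mul_exp_neg (upperSol.le_kappa hκ hlam hμ _) hκ hκ₁) hρ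
      _ = (δ + H) * κ := by rw [← hκρ]; ring
  have hdelay : κ * (1 - lam / (μ + lam) * (exp (σ * μ) * exp (-μ * t))) ≤
      upperSol κ lam μ (t - σ) := by
    convert upperSol.right_branch_le hκ hlam hμ (t - σ) using 4
    rw [← exp_add]; ring_nf
  have hdecay : 0 ≤ κ * (lam / (μ + lam)) * exp (-μ * t) := by positivity
  unfold nicholsonResidual
  rw [(upperSol.hasDerivAt_of_pos ht).deriv, upperSol.of_pos ht]
  nlinarith [mul_le_mul_of_nonneg_left hdelay hH, mul_nonneg hdecay hμ']

end Residual

theorem upper_solution_nicholson_general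
    (δ H ρ σ r : ℝ)
    (hH : 0 < H) (hρ : 0 < ρ) (hσ : 0 < σ)
    (hratio₁ : 1 < ρ / (δ + H)) (hratio₂ : ρ / (δ + H) ≤ Real.exp 1)
    (κ : ℝ) (hκ : κ = Real.log (ρ / (δ + H)))
    (lam : ℝ) (hlam : 0 < lam)
    (hchar : -lam - δ - H * Real.exp (-σ * lam) + ρ * Real.exp (-r * lam) = 0)
    (μ : ℝ) (hμ : 0 < μ) (hμ' : 0 ≤ μ - δ - H * Real.exp (σ * μ))
    (φb : ℝ → ℝ)
    (hφb : ∀ t : ℝ, φb t =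
      if t ≤ 0 then μ / (μ + lam) * κ * Real.exp (lam * t)
      else κ * (1 - lam / (μ + lam) * Real.exp (-μ * t))) :
    Continuous φb ∧
      ∀ t : ℝ, t ≠ 0 → DifferentiableAt ℝ φb t ∧
        -deriv φb t - δ * φb t - H * φb (t - σ) +
          ρ * φb (t - r) * Real.exp (-(φb (t - r))) ≤ 0 := by
  have hκ₀ : 0 ≤ κ := hκ ▸ (log_pos hratio₁).le
  have hκ₁ : κ ≤ 1 := hκ ▸ (log_le_iff_le_exp (by linarith)).mpr hratio₂
  have hκρ : ρ * exp (-κ) = δ + H := by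
    have hδH : δ + H ≠ 0 := fun h => by norm_num [h] at hratio₁
    rw [exp_neg, hκ, exp_log (by linarith)]
    field_simp
  obtain rfl : φb = upperSol κ lam μ := funext hφb
  refine ⟨upperSol.continuous hμ hlam, fun t ht => ?_⟩
  rcases ht.lt_or_gt with ht | ht
  · exact ⟨(upperSol.hasDerivAt_of_neg ht).differentiableAt,
      nicholsonResidual_upperSol_nonpos_of_neg hκ₀ hlam hμ hρ.le hσ.le hchar ht⟩
  · exact ⟨(upperSol.hasDerivAt_of_pos ht).differentiableAt,
      nicholsonResidual_upperSol_nonpos_of_pos hκ₀ hlam hμ hρ.le hH.le hκ₁ hκρ hμ' ht⟩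

/-- The piecewise function `φ̄(t) = (μ/(μ+λ))κe^{λt}` for `t ≤ 0`,
`φ̄(t) = κ(1 − (λ/(μ+λ))e^{−μt})` for `t > 0`, is an upper solution of the
Nicholson equation with harvesting. -/
theorem upper_solution_nicholson
    (δ H ρ σ r : ℝ)
    (hδ : 0 < δ) (hH : 0 < H) (hρ : 0 < ρ) (hσ : 0 < σ) (hσr : σ < r)
    (hratio₁ : 1 < ρ / (δ + H)) (hratio₂ : ρ / (δ + H) ≤ Real.exp 1)
    (κ : ℝ) (hκ : κ = Real.log (ρ / (δ + H)))
    (lam : ℝ) (hlam : 0 < lam)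
    (hchar : -lam - δ - H * Real.exp (-σ * lam) + ρ * Real.exp (-r * lam) = 0)
    (μ : ℝ) (hμ : 0 < μ) (hμ' : 0 ≤ μ - δ - H * Real.exp (σ * μ))
    (φb : ℝ → ℝ)
    (hφb : ∀ t : ℝ, φb t =
      if t ≤ 0 then μ / (μ + lam) * κ * Real.exp (lam * t)
      else κ * (1 - lam / (μ + lam) * Real.exp (-μ * t))) :
    Continuous φb ∧
      ∀ t : ℝ, t ≠ 0 → DifferentiableAt ℝ φb t ∧
        -deriv φb t - δ * φb t - H * φb (t - σ) +
          ρ * φb (t - r) * Real.exp (-(φb (t - r))) ≤ 0 :=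
  upper_solution_nicholson_general δ H ρ σ r hH hρ hσ hratio₁ hratio₂ κ hκ lam hlam hchar μ hμ hμ'
    φb hφb
end

section
/- Assume δ, H, ρ > 0, 1 < ρ/(δ+H) ≤ e, 0 < σ < r, and let λ > 0 satisfy −λ − δ − H e^{−σλ} + ρ e^{−rλ} = 0. Write χ₀(z) = −z − δ − H e^{−σz} + ρ e^{−rz}. Let t₀ < 0, let 0 < ε < λ satisfy (A) H e^{−(λ+ε)σ} − ρ e^{−(λ+ε)r} ≥ 0, and let α > 0 satisfy (B) α < (1/ρ) · min{ λ + δ + H e^{−(λ+ε)σ} − ρ e^{−(λ+ε)r}, −χ₀(λ+ε) (λ+ε)^{(λ+ε)/ε} / (4 ε² (λ−ε)^{(λ−ε)/ε}) }. Define φ̲ : ℝ → ℝ by φ̲(t) = α(1 − e^{ε(t−t₀)}) e^{λt} for t ≤ t₀ and φ̲(t) = 0 for t > t₀. Then φ̲ is a lower solution of the Nicholson equation with harvesting: φ̲ is continuous, differentiable at every t ≠ t₀, and −φ̲'(t) − δ φ̲(t) − H φ̲(t−σ) + ρ φ̲(t−r) e^{−φ̲(t−r)} ≥ 0 for all t ≠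 t₀. -/
open Real Filter

set_option maxHeartbeats 2000000

/-- The piecewise function `φ̲(t) = α(1 − e^{ε(t−t₀)})e^{λt}` for `t ≤ t₀`,
`φ̲(t) = 0` for `t > t₀`, is a lower solution of the Nicholson equation with
harvesting, under the conditions (A) and (B) on `ε` and `α`. -/
theorem lower_solution_nicholson
    (δ H ρ σ r : ℝ)
    (hδ : 0 < δ) (hH : 0 < H) (hρ : 0 < ρ) (hσ : 0 < σ) (hσr : σ < r)
    (hratio₁ : 1 < ρ / (δ + H)) (hratio₂ : ρ / (δ + H) ≤ Real.exp 1)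
    (lam : ℝ) (hlam : 0 < lam)
    (hchar : -lam - δ - H * Real.exp (-σ * lam) + ρ * Real.exp (-r * lam) = 0)
    (t₀ : ℝ) (ht₀ : t₀ < 0)
    (ε : ℝ) (hε : 0 < ε) (hεlam : ε < lam)
    -- (A)
    (hA : 0 ≤ H * Real.exp (-(lam + ε) * σ) - ρ * Real.exp (-(lam + ε) * r))
    (α : ℝ) (hα : 0 < α)
    -- (B)
    (hB : α < (1 / ρ) * min
      (lam + δ + H * Real.exp (-(lam + ε) * σ) - ρ * Real.exp (-(lam + ε) * r))
      (-(-(lam + ε) - δ - H * Real.exp (-σ * (lam + ε)) + ρ * Real.exp (-r * (lam + ε))) *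
        (lam + ε) ^ ((lam + ε) / ε) /
        (4 * ε ^ 2 * (lam - ε) ^ ((lam - ε) / ε))))
    (φl : ℝ → ℝ)
    (hφl : ∀ t : ℝ, φl t =
      if t ≤ t₀ then α * (1 - Real.exp (ε * (t - t₀))) * Real.exp (lam * t)
      else 0) :
    Continuous φl ∧
      ∀ t : ℝ, t ≠ t₀ → DifferentiableAt ℝ φl t ∧
        0 ≤ -deriv φl t - δ * φl t - H * φl (t - σ) +
          ρ * φl (t - r) * Real.exp (-(φl (t - r))) := by
  have hr : 0 < r := hσ.trans hσr
  -- rewrite the characteristic equation with normalized exponents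
  rw [show -σ * lam = -(lam * σ) from by ring, show -r * lam = -(lam * r) from by ring] at hchar
  -- extract the first bound from (B)
  have hBX : ρ * α <
      lam + δ + H * Real.exp (-(lam + ε) * σ) - ρ * Real.exp (-(lam + ε) * r) := by
    have h2 : ρ * ((1 / ρ) * min
        (lam + δ + H * Real.exp (-(lam + ε) * σ) - ρ * Real.exp (-(lam + ε) * r))
        (-(-(lam + ε) - δ - H * Real.exp (-σ * (lam + ε)) + ρ * Real.exp (-r * (lam + ε))) *
          (lam + ε) ^ ((lam + ε) / ε) /
          (4 * ε ^ 2 * (lam - ε) ^ ((lam - ε) / ε)))) = min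
        (lam + δ + H * Real.exp (-(lam + ε) * σ) - ρ * Real.exp (-(lam + ε) * r))
        (-(-(lam + ε) - δ - H * Real.exp (-σ * (lam + ε)) + ρ * Real.exp (-r * (lam + ε))) *
          (lam + ε) ^ ((lam + ε) / ε) /
          (4 * ε ^ 2 * (lam - ε) ^ ((lam - ε) / ε))) := by
      field_simp
    have h3 := mul_lt_mul_of_pos_left hB hρ
    rw [h2] at h3
    exact h3.trans_le (min_le_left _ _)
  -- normalized forms of (A) and the first bound
  rw [show -(lam + ε) * σ = -(lam * σ) + -(ε * σ) from by ring,
    show -(lam + ε) * r = -(lam * r) + -(ε * r) from by ring,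
    Real.exp_add, Real.exp_add] at hA hBX
  -- nonnegativity of φl
  have hφnn : ∀ s : ℝ, 0 ≤ φl s := by
    intro s
    rw [hφl s]
    split_ifs with h
    · have h1 : Real.exp (ε * (s - t₀)) ≤ 1 := by
        rw [Real.exp_le_one_iff]
        nlinarith
      have h2 := Real.exp_pos (lam * s)
      exact mul_nonneg (mul_nonneg hα.le (by linarith)) h2.le
    · exact le_refl 0
  constructor
  · -- continuity
    have hfun : φl = fun s => if s ≤ t₀ then
        α * (1 - Real.exp (ε * (s - t₀))) * Real.exp (lam * s) else 0 := funext hφl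
    rw [hfun]
    apply Continuous.if_le (by continuity) continuous_const continuous_id continuous_const
    intro s hs
    simp only [id] at hs
    rw [hs]
    simp
  · intro t ht
    rcases lt_or_gt_of_ne ht with htlt | htgt
    · -- case t < t₀
      have hmem : Set.Iio t₀ ∈ nhds t := Iio_mem_nhds htlt
      have heq : φl =ᶠ[nhds t]
          (fun s => α * (1 - Real.exp (ε * (s - t₀))) * Real.exp (lam * s)) :=
        eventually_of_mem hmem (fun s hs => by
          rw [hφl s, if_pos (le_of_lt hs)])
      have hd1 : HasDerivAt (fun s => ε * (s - t₀)) (ε * 1) t :=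
        ((hasDerivAt_id t).sub_const t₀).const_mul ε
      have hd2 : HasDerivAt (fun s => (1 : ℝ) - Real.exp (ε * (s - t₀)))
          (-(Real.exp (ε * (t - t₀)) * (ε * 1))) t := hd1.exp.const_sub 1
      have hd3 := hd2.const_mul α
      have hd4 : HasDerivAt (fun s => Real.exp (lam * s))
          (Real.exp (lam * t) * (lam * 1)) t := ((hasDerivAt_id t).const_mul lam).exp
      have hd5 := hd3.mul hd4
      have hD : HasDerivAt φl
          (α * -(Real.exp (ε * (t - t₀)) * (ε * 1)) * Real.exp (lam * t) +
            α * (1 - Real.exp (ε * (t - t₀))) * (Real.exp (lam * t) * (lam * 1))) t :=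
        hd5.congr_of_eventuallyEq heq
      refine ⟨hD.differentiableAt, ?_⟩
      rw [hD.deriv, hφl t, if_pos htlt.le, hφl (t - σ), if_pos (by linarith),
        hφl (t - r), if_pos (by linarith),
        show ε * (t - σ - t₀) = ε * (t - t₀) + -(ε * σ) from by ring,
        show lam * (t - σ) = lam * t + -(lam * σ) from by ring,
        show ε * (t - r - t₀) = ε * (t - t₀) + -(ε * r) from by ring,
        show lam * (t - r) = lam * t + -(lam * r) from by ring]
      simp only [Real.exp_add]
      set u := Real.exp (ε * (t - t₀)) with hu
      set P := Real.exp (lam * t) with hP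
      set Lσ := Real.exp (-(lam * σ)) with hLσ
      set Lr := Real.exp (-(lam * r)) with hLr
      set eσ := Real.exp (-(ε * σ)) with heσ
      set er := Real.exp (-(ε * r)) with her
      have hu0 : 0 < u := by rw [hu]; exact Real.exp_pos _
      have hP0 : 0 < P := by rw [hP]; exact Real.exp_pos _
      have hLr0 : 0 < Lr := by rw [hLr]; exact Real.exp_pos _
      have hu1 : u ≤ 1 := by rw [hu, Real.exp_le_one_iff]; nlinarith
      have her1 : er ≤ 1 := by rw [her, Real.exp_le_one_iff]; nlinarith
      have her0 : 0 < er := by rw [her]; exact Real.exp_pos _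
      set x := α * (1 - u * er) * (P * Lr) with hx
      clear_value u P Lσ Lr eσ er x
      have huer : u * er ≤ 1 := by nlinarith
      have hx0 : 0 ≤ x := by
        rw [hx]
        have : 0 ≤ 1 - u * er := by linarith
        positivity
      have hxle : x ≤ α * (P * Lr) := by
        rw [hx]
        nlinarith [mul_pos (mul_pos hα (mul_pos hP0 hLr0)) (mul_pos hu0 her0)]
      have hexpx : 1 - x ≤ Real.exp (-x) := by linarith [Real.add_one_le_exp (-x)]
      have key1 : ρ * x - ρ * x ^ 2 ≤ ρ * x * Real.exp (-x) := by
        nlinarith [mul_le_mul_of_nonneg_left hexpx (mul_nonneg hρ.le hx0)]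
      -- identity via the characteristic equation
      have hid : -(α * -(u * (ε * 1)) * P + α * (1 - u) * (P * (lam * 1)))
            - δ * (α * (1 - u) * P) - H * (α * (1 - u * eσ) * (P * Lσ)) + ρ * x
          = α * P * u * (lam + ε + δ + H * (Lσ * eσ) - ρ * (Lr * er)) := by
        rw [hx]; linear_combination (α * P) * hchar
      have e0 : ρ * α ≤ lam + ε + δ + H * (Lσ * eσ) - ρ * (Lr * er) := by
        linarith [hBX]
      have e1 : α * P * u * (ρ * α) ≤
          α * P * u * (lam + ε + δ + H * (Lσ * eσ) - ρ * (Lr * er)) := by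
        apply mul_le_mul_of_nonneg_left e0
        positivity
      have hPLr2 : P * (Lr * Lr) ≤ u := by
        rw [hP, hLr, hu, ← Real.exp_add, ← Real.exp_add]
        apply Real.exp_le_exp.mpr
        nlinarith [mul_nonneg (sub_nonneg.2 hεlam.le) (sub_nonneg.2 htlt.le),
          mul_nonneg hlam.le (neg_nonneg.2 ht₀.le), mul_nonneg hlam.le hr.le]
      have e2 : ρ * x ^ 2 ≤ ρ * (α * (P * Lr)) ^ 2 := by
        nlinarith [mul_self_le_mul_self hx0 hxle]
      have e3 : ρ * (α * (P * Lr)) ^ 2 ≤ α * P * u * (ρ * α) := by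
        have h := mul_le_mul_of_nonneg_left hPLr2
          (show (0:ℝ) ≤ ρ * α ^ 2 * P by positivity)
        nlinarith [h]
      linarith [hid, key1, e1, e2, e3]
    · -- case t > t₀
      have hmem : Set.Ioi t₀ ∈ nhds t := Ioi_mem_nhds htgt
      have heq : φl =ᶠ[nhds t] (fun _ => (0:ℝ)) :=
        eventually_of_mem hmem (fun s hs => by
          rw [hφl s, if_neg (not_le.2 hs)])
      have hD : HasDerivAt φl 0 t := (hasDerivAt_const t (0:ℝ)).congr_of_eventuallyEq heq
      refine ⟨hD.differentiableAt, ?_⟩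
      rw [hD.deriv, hφl t, if_neg (not_le.2 htgt)]
      by_cases hσt : t - σ ≤ t₀
      · -- hard subcase: t₀ < t ≤ t₀ + σ
        have hrt : t - r ≤ t₀ := by linarith
        rw [hφl (t - σ), if_pos hσt, hφl (t - r), if_pos hrt,
          show ε * (t - σ - t₀) = ε * (t - t₀) + -(ε * σ) from by ring,
          show lam * (t - σ) = lam * t + -(lam * σ) from by ring,
          show ε * (t - r - t₀) = ε * (t - t₀) + -(ε * r) from by ring,
          show lam * (t - r) = lam * t + -(lam * r) from by ring]
        simp only [Real.exp_add]
        set u := Real.exp (ε * (t - t₀)) with hu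
        set P := Real.exp (lam * t) with hP
        set Lσ := Real.exp (-(lam * σ)) with hLσ
        set Lr := Real.exp (-(lam * r)) with hLr
        set eσ := Real.exp (-(ε * σ)) with heσ
        set er := Real.exp (-(ε * r)) with her
        have hu0 : 0 < u := by rw [hu]; exact Real.exp_pos _
        have hP0 : 0 < P := by rw [hP]; exact Real.exp_pos _
        have hLr0 : 0 < Lr := by rw [hLr]; exact Real.exp_pos _
        have her0 : 0 < er := by rw [her]; exact Real.exp_pos _
        have hu1 : 1 ≤ u := by
          rw [hu]; have := Real.add_one_le_exp (ε * (t - t₀)); nlinarith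
        have huer : u * er ≤ 1 := by
          rw [hu, her, ← Real.exp_add, Real.exp_le_one_iff]; nlinarith
        set x := α * (1 - u * er) * (P * Lr) with hx
        clear_value u P Lσ Lr eσ er x
        have hx0 : 0 ≤ x := by
          rw [hx]
          have : 0 ≤ 1 - u * er := by linarith
          positivity
        have hxle : x ≤ α * (P * Lr) := by
          rw [hx]
          nlinarith [mul_pos (mul_pos hα (mul_pos hP0 hLr0)) (mul_pos hu0 her0)]
        have hexpx : 1 - x ≤ Real.exp (-x) := by linarith [Real.add_one_le_exp (-x)]
        have key1 : ρ * x - ρ * x ^ 2 ≤ ρ * x * Real.exp (-x) := by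
          nlinarith [mul_le_mul_of_nonneg_left hexpx (mul_nonneg hρ.le hx0)]
        have hid : ρ * x - H * (α * (1 - u * eσ) * (P * Lσ))
            = α * P * (lam + δ + u * (H * (Lσ * eσ) - ρ * (Lr * er))) := by
          rw [hx]; linear_combination (α * P) * hchar
        have e0 : ρ * α ≤ lam + δ + u * (H * (Lσ * eσ) - ρ * (Lr * er)) := by
          nlinarith [mul_nonneg (sub_nonneg.2 hu1) hA]
        have e1 : α * P * (ρ * α) ≤
            α * P * (lam + δ + u * (H * (Lσ * eσ) - ρ * (Lr * er))) := by
          apply mul_le_mul_of_nonneg_left e0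
          positivity
        have hPLr2 : P * (Lr * Lr) ≤ 1 := by
          rw [hP, hLr, ← Real.exp_add, ← Real.exp_add, Real.exp_le_one_iff]
          nlinarith
        have e2 : ρ * x ^ 2 ≤ ρ * (α * (P * Lr)) ^ 2 := by
          nlinarith [mul_self_le_mul_self hx0 hxle]
        have e3 : ρ * (α * (P * Lr)) ^ 2 ≤ α * P * (ρ * α) := by
          have h := mul_le_mul_of_nonneg_left hPLr2
            (show (0:ℝ) ≤ ρ * α ^ 2 * P by positivity)
          nlinarith [h]
        linarith [hid, key1, e1, e2, e3]
      · -- easy subcase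
        rw [hφl (t - σ), if_neg hσt]
        have h1 := hφnn (t - r)
        have h2 := (Real.exp_pos (-(φl (t - r)))).le
        have h3 : 0 ≤ ρ * φl (t - r) * Real.exp (-(φl (t - r))) :=
          mul_nonneg (mul_nonneg hρ.le h1) h2
        linarith
end

section
/- Let κ, λ, μ > 0 and define φ̄ : ℝ → ℝ by φ̄(t) = (μ/(μ+λ)) κ e^{λt} for t ≤ 0 and φ̄(t) = κ(1 − (λ/(μ+λ)) e^{−μt}) for t > 0. Then φ̄ is non-decreasing on ℝ, lim_{t→−∞} φ̄(t) = 0, lim_{t→+∞} φ̄(t) = κ, and for every s > 0 the function t ↦ e^{μt}(φ̄(t+s) − φ̄(t)) is non-decreasing on ℝ. -/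
open Real Filter

/-!
Both pieces of `φ̄` meet at `0` with the common value `μκ/(μ+λ)` and the common slope
`λμκ/(μ+λ)`, so `φ̄` is `C¹` with a positive derivative. Writing
`g(t) = e^{μt}(φ̄(t+s) − φ̄(t))`, one has `g'(t) = e^{μt}(ψ(t+s) − ψ(t))` for
`ψ = φ̄' + μφ̄`, and `ψ(t) = μκ·e^{λ·min(t, 0)}` is non-decreasing.
-/

theorem hasDerivAt_ite_le {g h g' h' : ℝ → ℝ} {a : ℝ}
    (hg : ∀ t, HasDerivAt g (g' t) t) (hh : ∀ t, HasDerivAt h (h' t) t)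
    (hval : g a = h a) (hder : g' a = h' a) (t : ℝ) :
    HasDerivAt (fun t => if t ≤ a then g t else h t) (if t ≤ a then g' t else h' t) t := by
  rcases lt_trichotomy t a with hlt | rfl | hgt
  · rw [if_pos hlt.le]
    refine (hg t).congr_of_eventuallyEq ?_
    filter_upwards [eventually_lt_nhds hlt] with x hx using if_pos hx.le
  · rw [if_pos le_rfl, ← hasDerivWithinAt_univ, ← Set.Iic_union_Ici (a := t)]
    refine ((hg t).hasDerivWithinAt.congr_of_mem (fun x hx => if_pos (Set.mem_Iic.mp hx))
      Set.self_mem_Iic).union ?_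
    rw [hder]
    refine (hh t).hasDerivWithinAt.congr_of_mem (fun x hx => ?_) Set.self_mem_Ici
    rcases (Set.mem_Ici.mp hx).eq_or_lt with rfl | hx
    · exact (if_pos le_rfl).trans hval
    · exact if_neg hx.not_ge
  · rw [if_neg hgt.not_ge]
    refine (hh t).congr_of_eventuallyEq ?_
    filter_upwards [eventually_gt_nhds hgt] with x hx using if_neg hx.not_ge

theorem monotone_exp_mul_mul_sub_of_monotone_deriv_add_mul {φ φ' : ℝ → ℝ} {μ s : ℝ}
    (hφ : ∀ t, HasDerivAt φ (φ' t) t) (hψ : Monotone fun t => φ' t + μ * φ t)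
    (hs : 0 ≤ s) :
    Monotone fun t => exp (μ * t) * (φ (t + s) - φ t) := by
  refine monotone_of_hasDerivAt_nonneg
    (f' := fun t => exp (μ * t) * ((φ' (t + s) + μ * φ (t + s)) - (φ' t + μ * φ t)))
    (fun t => ?_) (fun t => ?_)
  · have hshift : HasDerivAt (fun t => φ (t + s)) (φ' (t + s)) t :=
      (hφ (t + s)).comp_add_const t s
    refine ((((hasDerivAt_id' t).const_mul μ).exp).mul (hshift.sub (hφ t))).congr_deriv ?_
    rw [Pi.sub_apply]
    ring
  · exact mul_nonneg (exp_pos _).le (sub_nonneg.mpr (hψ (by linarith)))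

noncomputable section UpperSolution

variable (κ lam μ : ℝ)

def upperSolution (t : ℝ) : ℝ :=
  if t ≤ 0 then μ / (μ + lam) * κ * exp (lam * t)
  else κ * (1 - lam / (μ + lam) * exp (-μ * t))

def upperSolutionDeriv (t : ℝ) : ℝ :=
  if t ≤ 0 then lam * μ / (μ + lam) * κ * exp (lam * t)
  else lam * μ / (μ + lam) * κ * exp (-μ * t)

variable {κ lam μ}

theorem hasDerivAt_upperSolution (hμlam : μ + lam ≠ 0) (t : ℝ) :
    HasDerivAt (upperSolution κ lam μ) (upperSolutionDeriv κ lam μ t) t := by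
  have hexp (r t : ℝ) : HasDerivAt (fun t => exp (r * t)) (r * exp (r * t)) t := by
    simpa [mul_comm] using ((hasDerivAt_id t).const_mul r).exp
  have hleft (t : ℝ) : HasDerivAt (fun t => μ / (μ + lam) * κ * exp (lam * t))
      (lam * μ / (μ + lam) * κ * exp (lam * t)) t :=
    ((hexp lam t).const_mul (μ / (μ + lam) * κ)).congr_deriv (by ring)
  have hright (t : ℝ) : HasDerivAt (fun t => κ * (1 - lam / (μ + lam) * exp (-μ * t)))
      (lam * μ / (μ + lam) * κ * exp (-μ * t)) t :=
    (((hexp (-μ) t).const_mul (lam / (μ + lam))).const_sub 1 |>.const_mul κ).congr_deriv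
      (by ring)
  refine hasDerivAt_ite_le hleft hright ?_ ?_ t
  · simp only [mul_zero, exp_zero]
    field_simp
    ring
  · simp only [mul_zero, exp_zero]

theorem upperSolutionDeriv_nonneg (hκ : 0 ≤ κ) (hlam : 0 < lam) (hμ : 0 < μ) :
    0 ≤ upperSolutionDeriv κ lam μ := fun t => by
  unfold upperSolutionDeriv
  split_ifs <;> positivity

theorem upperSolutionDeriv_add_mul_upperSolution (hμlam : μ + lam ≠ 0) (t : ℝ) :
    upperSolutionDeriv κ lam μ t + μ * upperSolution κ lam μ t =
      μ * κ * exp (lam * min t 0) := by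
  unfold upperSolutionDeriv upperSolution
  split_ifs with ht
  · rw [min_eq_left ht]
    field_simp
    ring
  · rw [min_eq_right (not_le.mp ht).le, mul_zero, exp_zero]
    field_simp
    ring

theorem monotone_upperSolutionDeriv_add_mul_upperSolution (hκ : 0 ≤ κ) (hlam : 0 < lam)
    (hμ : 0 < μ) :
    Monotone fun t => upperSolutionDeriv κ lam μ t + μ * upperSolution κ lam μ t := by
  simp only [upperSolutionDeriv_add_mul_upperSolution (by positivity : μ + lam ≠ 0)]
  exact (exp_monotone.comp ((monotone_id.min monotone_const).const_mul hlam.le)).const_mul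
    (by positivity)

theorem tendsto_upperSolution_atBot (hlam : 0 < lam) :
    Tendsto (upperSolution κ lam μ) atBot (nhds 0) := by
  have hleft : Tendsto (fun t => μ / (μ + lam) * κ * exp (lam * t)) atBot (nhds 0) := by
    simpa using (tendsto_exp_atBot.comp (tendsto_id.const_mul_atBot hlam)).const_mul
      (μ / (μ + lam) * κ)
  refine hleft.congr' ?_
  filter_upwards [eventually_le_atBot 0] with t ht using (if_pos ht).symm

theorem tendsto_upperSolution_atTop (hμ : 0 < μ) :
    Tendsto (upperSolution κ lam μ) atTop (nhds κ) := by
  have hright : Tendsto (fun t => κ * (1 - lam / (μ + lam) * exp (-μ * t))) atTop (nhds κ) := by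
    simpa using ((tendsto_exp_atBot.comp (tendsto_id.const_mul_atTop_of_neg
      (neg_neg_of_pos hμ))).const_mul (lam / (μ + lam))).const_sub 1 |>.const_mul κ
  refine hright.congr' ?_
  filter_upwards [eventually_gt_atTop 0] with t ht using (if_neg ht.not_ge).symm

end UpperSolution

/-- The upper solution `φ̄(t) = (μ/(μ+λ))κe^{λt}` for `t ≤ 0`,
`φ̄(t) = κ(1 − (λ/(μ+λ))e^{−μt})` for `t > 0`, belongs to the profile set `Γ`
with weight `β = μ`. -/
theorem upper_solution_in_profile_set
    (κ lam μ : ℝ) (hκ : 0 < κ) (hlam : 0 < lam) (hμ : 0 < μ)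
    (φb : ℝ → ℝ)
    (hφb : ∀ t : ℝ, φb t =
      if t ≤ 0 then μ / (μ + lam) * κ * Real.exp (lam * t)
      else κ * (1 - lam / (μ + lam) * Real.exp (-μ * t))) :
    Monotone φb ∧
      Tendsto φb atBot (nhds 0) ∧ Tendsto φb atTop (nhds κ) ∧
      ∀ s : ℝ, 0 < s →
        Monotone fun t : ℝ => Real.exp (μ * t) * (φb (t + s) - φb t) := by
  obtain rfl : φb = upperSolution κ lam μ := funext hφb
  have hderiv := hasDerivAt_upperSolution (κ := κ) (lam := lam) (μ := μ) (by positivity)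
  exact ⟨monotone_of_hasDerivAt_nonneg hderiv (upperSolutionDeriv_nonneg hκ.le hlam hμ),
    tendsto_upperSolution_atBot hlam, tendsto_upperSolution_atTop hμ,
    fun s hs => monotone_exp_mul_mul_sub_of_monotone_deriv_add_mul hderiv
      (monotone_upperSolutionDeriv_add_mul_upperSolution hκ.le hlam hμ) hs.le⟩
end

section
/- Let κ, λ, μ > 0, t₀ < 0, ε > 0, and let α > 0 satisfy α ≤ κμ/(λ+μ). Define φ̄(t) = (μ/(μ+λ)) κ e^{λt} for t ≤ 0, φ̄(t) = κ(1 − (λ/(μ+λ)) e^{−μt}) for t > 0, and φ̲(t) = α(1 − e^{ε(t−t₀)}) e^{λt} for t ≤ t₀, φ̲(t) = 0 for t > t₀. Then (1) φ̲(t) ≤ φ̄(t) for all t ∈ ℝ, and (2) the function t ↦ e^{μt}(φ̄(t) − φ̲(t)) is non-decreasing on ℝ. -/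
open Real

/-- Compatibility of the upper solution `φ̄` and the lower solution `φ̲`:
`φ̲ ≤ φ̄` on `ℝ` and `t ↦ e^{μt}(φ̄(t) − φ̲(t))` is non-decreasing. -/
theorem upper_lower_compatibility
    (κ lam μ : ℝ) (hκ : 0 < κ) (hlam : 0 < lam) (hμ : 0 < μ)
    (t₀ : ℝ) (ht₀ : t₀ < 0) (ε : ℝ) (hε : 0 < ε)
    (α : ℝ) (hα : 0 < α) (hαle : α ≤ κ * μ / (lam + μ))
    (φb : ℝ → ℝ)
    (hφb : ∀ t : ℝ, φb t =
      if t ≤ 0 then μ / (μ + lam) * κ * Real.exp (lam * t)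
      else κ * (1 - lam / (μ + lam) * Real.exp (-μ * t)))
    (φl : ℝ → ℝ)
    (hφl : ∀ t : ℝ, φl t =
      if t ≤ t₀ then α * (1 - Real.exp (ε * (t - t₀))) * Real.exp (lam * t)
      else 0) :
    (∀ t : ℝ, φl t ≤ φb t) ∧
      Monotone fun t : ℝ => Real.exp (μ * t) * (φb t - φl t) := by
  have hml : 0 < μ + lam := by linarith
  have hc : 0 < μ / (μ + lam) * κ := by positivity
  have hαc : α ≤ μ / (μ + lam) * κ := by
    have h : κ * μ / (lam + μ) = μ / (μ + lam) * κ := by ring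
    linarith [hαle, h ▸ hαle]
  have key1 : ∀ u : ℝ,
      Real.exp (μ * u) * (μ / (μ + lam) * κ * Real.exp (lam * u)
        - α * (1 - Real.exp (ε * (u - t₀))) * Real.exp (lam * u))
      = (μ / (μ + lam) * κ - α) * Real.exp ((μ + lam) * u)
        + α * Real.exp ((μ + lam) * u + ε * (u - t₀)) := by
    intro u
    rw [show (μ + lam) * u + ε * (u - t₀) = (μ * u + lam * u) + ε * (u - t₀) from by ring,
      Real.exp_add, show (μ + lam) * u = μ * u + lam * u from by ring, Real.exp_add]
    ring
  have key2 : ∀ u : ℝ,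
      Real.exp (μ * u) * (μ / (μ + lam) * κ * Real.exp (lam * u))
      = μ / (μ + lam) * κ * Real.exp ((μ + lam) * u) := by
    intro u
    rw [show (μ + lam) * u = μ * u + lam * u from by ring, Real.exp_add]
    ring
  have key3 : ∀ u : ℝ,
      Real.exp (μ * u) * (κ * (1 - lam / (μ + lam) * Real.exp (-μ * u)))
      = κ * Real.exp (μ * u) - lam / (μ + lam) * κ := by
    intro u
    have h : Real.exp (μ * u) * Real.exp (-μ * u) = 1 := by
      rw [← Real.exp_add, show μ * u + -μ * u = 0 from by ring, Real.exp_zero]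
    linear_combination (-(lam / (μ + lam) * κ)) * h
  have hsum : μ / (μ + lam) * κ + lam / (μ + lam) * κ = κ := by
    field_simp
  -- c ≤ h3(t) for t > 0
  have cross3 : ∀ u : ℝ, 0 < u →
      μ / (μ + lam) * κ ≤ κ * Real.exp (μ * u) - lam / (μ + lam) * κ := by
    intro u hu
    have h1 : (1 : ℝ) ≤ Real.exp (μ * u) := by
      rw [← Real.exp_zero]
      exact Real.exp_le_exp.mpr (by positivity)
    nlinarith [h1]
  -- h1(u) ≤ c * exp((μ+lam) u) for u ≤ t₀
  have cross1 : ∀ u : ℝ, u ≤ t₀ →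
      (μ / (μ + lam) * κ - α) * Real.exp ((μ + lam) * u)
        + α * Real.exp ((μ + lam) * u + ε * (u - t₀))
      ≤ μ / (μ + lam) * κ * Real.exp ((μ + lam) * u) := by
    intro u hu
    have h1 : Real.exp ((μ + lam) * u + ε * (u - t₀)) ≤ Real.exp ((μ + lam) * u) :=
      Real.exp_le_exp.mpr (by nlinarith [mul_nonneg hε.le (sub_nonneg.mpr hu)])
    nlinarith [h1]
  have hEle1 : ∀ u : ℝ, u ≤ 0 → Real.exp ((μ + lam) * u) ≤ 1 := by
    intro u hu
    rw [← Real.exp_zero]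
    exact Real.exp_le_exp.mpr (by nlinarith [mul_nonneg hml.le (neg_nonneg.mpr hu)])
  constructor
  · intro t
    rw [hφb t, hφl t]
    split_ifs with h1 h2 h3
    · have hE : 0 < Real.exp (ε * (t - t₀)) := Real.exp_pos _
      have hX : 0 < Real.exp (lam * t) := Real.exp_pos _
      have h : α * (1 - Real.exp (ε * (t - t₀))) ≤ μ / (μ + lam) * κ := by nlinarith
      exact mul_le_mul_of_nonneg_right h hX.le
    · linarith
    · positivity
    · have hE : Real.exp (-μ * t) ≤ 1 := by
        rw [← Real.exp_zero]
        exact Real.exp_le_exp.mpr (by nlinarith [mul_pos hμ (not_le.mp h3)])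
      have hE0 : 0 < Real.exp (-μ * t) := Real.exp_pos _
      have hq : lam / (μ + lam) ≤ 1 := by
        rw [div_le_one hml]; linarith
      have hq0 : 0 < lam / (μ + lam) := by positivity
      nlinarith [hE, hE0, hq, hq0]
  · intro s t hst
    dsimp only
    rw [hφb s, hφb t, hφl s, hφl t]
    rcases le_or_gt s t₀ with hs1 | hs1
    · have hs0 : s ≤ 0 := le_trans hs1 ht₀.le
      rcases le_or_gt t t₀ with ht1 | ht1
      · have ht0' : t ≤ 0 := le_trans ht1 ht₀.le
        rw [if_pos hs0, if_pos hs1, if_pos ht0', if_pos ht1, key1 s, key1 t]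
        have hA : (μ / (μ + lam) * κ - α) * Real.exp ((μ + lam) * s)
            ≤ (μ / (μ + lam) * κ - α) * Real.exp ((μ + lam) * t) := by
          apply mul_le_mul_of_nonneg_left _ (by linarith)
          exact Real.exp_le_exp.mpr (by nlinarith [mul_le_mul_of_nonneg_left hst hml.le, mul_le_mul_of_nonneg_left hst hμ.le])
        have hB : α * Real.exp ((μ + lam) * s + ε * (s - t₀))
            ≤ α * Real.exp ((μ + lam) * t + ε * (t - t₀)) := by
          apply mul_le_mul_of_nonneg_left _ hα.le
          exact Real.exp_le_exp.mpr (by nlinarith [mul_le_mul_of_nonneg_left hst hml.le, mul_le_mul_of_nonneg_left hst hμ.le])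
        linarith
      · rcases le_or_gt t 0 with ht0' | ht0'
        · rw [if_pos hs0, if_pos hs1, if_pos ht0', if_neg (not_le.mpr ht1), sub_zero,
            key1 s, key2 t]
          have hB : μ / (μ + lam) * κ * Real.exp ((μ + lam) * s)
              ≤ μ / (μ + lam) * κ * Real.exp ((μ + lam) * t) := by
            apply mul_le_mul_of_nonneg_left _ hc.le
            exact Real.exp_le_exp.mpr (by nlinarith [mul_le_mul_of_nonneg_left hst hml.le, mul_le_mul_of_nonneg_left hst hμ.le])
          linarith [cross1 s hs1]
        · rw [if_pos hs0, if_pos hs1, if_neg (not_le.mpr ht0'), if_neg (not_le.mpr ht1),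
            sub_zero, key1 s, key3 t]
          have h2 : μ / (μ + lam) * κ * Real.exp ((μ + lam) * s) ≤ μ / (μ + lam) * κ := by
            nlinarith [hEle1 s hs0, Real.exp_pos ((μ + lam) * s)]
          linarith [cross1 s hs1, cross3 t ht0']
    · have hsl : ¬ s ≤ t₀ := not_le.mpr hs1
      have htl : ¬ t ≤ t₀ := not_le.mpr (lt_of_lt_of_le hs1 hst)
      rcases le_or_gt s 0 with hs0 | hs0
      · rcases le_or_gt t 0 with ht0' | ht0'
        · rw [if_pos hs0, if_neg hsl, if_pos ht0', if_neg htl, sub_zero, sub_zero,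
            key2 s, key2 t]
          apply mul_le_mul_of_nonneg_left _ hc.le
          exact Real.exp_le_exp.mpr (by nlinarith [mul_le_mul_of_nonneg_left hst hml.le, mul_le_mul_of_nonneg_left hst hμ.le])
        · rw [if_pos hs0, if_neg hsl, if_neg (not_le.mpr ht0'), if_neg htl, sub_zero,
            sub_zero, key2 s, key3 t]
          have h2 : μ / (μ + lam) * κ * Real.exp ((μ + lam) * s) ≤ μ / (μ + lam) * κ := by
            nlinarith [hEle1 s hs0, Real.exp_pos ((μ + lam) * s)]
          linarith [cross3 t ht0']
      · have ht0' : ¬ t ≤ 0 := not_le.mpr (lt_of_lt_of_le hs0 hst)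
        rw [if_neg (not_le.mpr hs0), if_neg hsl, if_neg ht0', if_neg htl, sub_zero,
          sub_zero, key3 s, key3 t]
        have : Real.exp (μ * s) ≤ Real.exp (μ * t) :=
          Real.exp_le_exp.mpr (by nlinarith [mul_le_mul_of_nonneg_left hst hml.le, mul_le_mul_of_nonneg_left hst hμ.le])
        linarith [mul_le_mul_of_nonneg_left this hκ.le]
end
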